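/- arXiv:2203.05818 — 5 statements merged into one kernel-verified Lean document; each statement's English description precedes it below -/
import Mathlib

section
/- Let X_v, X_s, Y be real-valued random variables on a probability space, and let X := q(X_v, X_s) for a measurable function q : ℝ × ℝ → ℝ^d. Then there exists a probability space carrying random variables X_v', X_s', Y', η₁, η₂ and measurable functions f₁' : ℝ × ℝ → ℝ and f₂' : ℝ × ℝ × ℝ → ℝ such that: η₁ and η₂ are each uniformly distributed on (0,1); X_v' has the law of X_s; η₁ is independent of X_v'; η₂ is independent of the pair (X_v', η₁); Y' = f₁'(X_v', η₁); X_s' = f₂'(X_v', Y', η₂); and the joint law of (X_v', X_s', Y') equals the joint law of (X_s, X_v, Y). In particular, setting q'(a,b) := q(b,a), the law of (q'(X_v', X_s'), Y') equals the law of (X, Y), so a structural causal model in which the variable distributed as X_s plays the role of the invariant feature (the direct cause of the label) induces exactly the same observed joint distribution of (X, Y). -/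
open MeasureTheory ProbabilityTheory

section Aux
open Set Filter

noncomputable def unif : Measure ℝ := volume.restrict (Set.Ioo 0 1)

instance : IsProbabilityMeasure unif :=
  ⟨by simp [unif, Real.volume_Ioo]⟩

variable {α : Type*} [MeasurableSpace α]

/-- Generalized inverse (quantile) of the conditional CDF, cut off outside `(0,1)`. -/
noncomputable def qf (ρ : Measure (α × ℝ)) (p : α × ℝ) : ℝ :=
  if p.2 ∈ Set.Ioo (0:ℝ) 1 then sInf {x | p.2 ≤ condCDF ρ p.1 x} else 0

lemma qf_le_iff (ρ : Measure (α × ℝ)) {a : α} {u x : ℝ} (hu : u ∈ Set.Ioo (0:ℝ) 1) :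
    qf ρ (a, u) ≤ x ↔ u ≤ condCDF ρ a x := by
  have hmono : Monotone (condCDF ρ a) := (condCDF ρ a).mono
  have hne : {x | u ≤ condCDF ρ a x}.Nonempty := by
    have := (tendsto_condCDF_atTop ρ a).eventually (lt_mem_nhds hu.2)
    rcases this.exists with ⟨x, hx⟩
    exact ⟨x, hx.le⟩
  have hbdd : BddBelow {x | u ≤ condCDF ρ a x} := by
    have := (tendsto_condCDF_atBot ρ a).eventually (gt_mem_nhds hu.1)
    rcases this.exists with ⟨y, hy⟩
    refine ⟨y, fun x hx => ?_⟩
    by_contra hxy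
    exact absurd (hx.trans (hmono (le_of_not_ge hxy))) (not_le.2 hy)
  rw [qf, if_pos hu]
  constructor
  · intro h
    have h' : ∀ x' ∈ Ioi x, u ≤ condCDF ρ a x' := by
      intro x' hx'
      obtain ⟨s, hs, hsx⟩ := (csInf_lt_iff hbdd hne).1 (lt_of_le_of_lt h hx')
      exact hs.trans (hmono hsx.le)
    have hrc : Tendsto (condCDF ρ a) (nhdsWithin x (Ioi x)) (nhds (condCDF ρ a x)) :=
      ((condCDF ρ a).right_continuous x).mono Ioi_subset_Ici_self
    exact ge_of_tendsto hrc (eventually_nhdsWithin_of_forall h')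
  · intro h
    exact csInf_le hbdd h

lemma measurable_qf (ρ : Measure (α × ℝ)) : Measurable (qf ρ) := by
  apply measurable_of_Iic
  intro x
  have : qf ρ ⁻¹' Iic x =
      ({p : α × ℝ | p.2 ∈ Set.Ioo (0:ℝ) 1} ∩ {p | p.2 ≤ condCDF ρ p.1 x}) ∪
      ({p : α × ℝ | p.2 ∈ Set.Ioo (0:ℝ) 1}ᶜ ∩ {p | (0:ℝ) ≤ x}) := by
    ext p
    by_cases hp : p.2 ∈ Set.Ioo (0:ℝ) 1
    · simp only [mem_preimage, mem_Iic, mem_union, mem_inter_iff, mem_setOf_eq, mem_compl_iff,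
        hp, not_true, false_and, or_false, true_and]
      exact qf_le_iff ρ hp
    · simp only [mem_preimage, mem_Iic, qf, if_neg hp, mem_union, mem_inter_iff, mem_setOf_eq,
        mem_compl_iff, hp, false_and, not_false_iff, true_and, false_or]
      simp
  rw [this]
  have h1 : MeasurableSet {p : α × ℝ | p.2 ∈ Set.Ioo (0:ℝ) 1} :=
    measurable_snd measurableSet_Ioo
  exact (h1.inter (measurableSet_le measurable_snd
    ((measurable_condCDF ρ x).comp measurable_fst))).union
    (h1.compl.inter (MeasurableSet.const _))

lemma unif_qf_section (ρ : Measure (α × ℝ)) (a : α) (x : ℝ) :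
    unif {u | qf ρ (a, u) ≤ x} = ENNReal.ofReal (condCDF ρ a x) := by
  set c := condCDF ρ a x with hc
  have hc0 : 0 ≤ c := condCDF_nonneg ρ a x
  have hc1 : c ≤ 1 := condCDF_le_one ρ a x
  have hmeas : MeasurableSet {u : ℝ | qf ρ (a, u) ≤ x} :=
    measurableSet_le ((measurable_qf ρ).comp measurable_prodMk_left) measurable_const
  rw [unif, Measure.restrict_apply hmeas]
  have hset : {u : ℝ | qf ρ (a, u) ≤ x} ∩ Set.Ioo 0 1 = Set.Iic c ∩ Set.Ioo 0 1 := by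
    ext u
    simp only [mem_inter_iff, mem_setOf_eq, mem_Iic]
    constructor
    · rintro ⟨h, hu⟩; exact ⟨(qf_le_iff ρ hu).1 h, hu⟩
    · rintro ⟨h, hu⟩; exact ⟨(qf_le_iff ρ hu).2 h, hu⟩
  rw [hset]
  rcases lt_or_ge c 1 with h1 | h1
  · have : Set.Iic c ∩ Set.Ioo 0 1 = Set.Ioc 0 c := by
      ext u
      simp only [mem_inter_iff, mem_Iic, mem_Ioo, mem_Ioc]
      constructor
      · rintro ⟨h, h0, _⟩; exact ⟨h0, h⟩
      · rintro ⟨h0, h⟩; exact ⟨h, h0, lt_of_le_of_lt h h1⟩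
    rw [this, Real.volume_Ioc, sub_zero]
  · have hc : c = 1 := le_antisymm hc1 h1
    have : Set.Iic c ∩ Set.Ioo 0 1 = Set.Ioo 0 1 := by
      rw [hc]
      ext u
      simp only [mem_inter_iff, mem_Iic, mem_Ioo, and_iff_right_iff_imp]
      exact fun h => h.2.le
    rw [this, Real.volume_Ioo, hc]
    norm_num

lemma map_qf (ρ : Measure (α × ℝ)) [IsFiniteMeasure ρ] :
    Measure.map (fun p : α × ℝ => (p.1, qf ρ p)) (ρ.fst.prod unif) = ρ := by
  have hmeas : Measurable (fun p : α × ℝ => (p.1, qf ρ p)) :=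
    measurable_fst.prodMk (measurable_qf ρ)
  have hspan : IsCountablySpanning (Set.range (Iic : ℝ → Set ℝ)) := by
    refine ⟨fun n => Iic (n : ℝ), fun n => Set.mem_range_self _, ?_⟩
    ext x
    simp only [mem_iUnion, mem_Iic, mem_univ, iff_true]
    exact ⟨⌈x⌉₊, Nat.le_ceil x⟩
  refine ext_of_generate_finite
    (Set.image2 (· ×ˢ ·) { s : Set α | MeasurableSet s } (Set.range (Iic : ℝ → Set ℝ)))
    ?_ ?_ ?_ ?_
  · refine (generateFrom_eq_prod MeasurableSpace.generateFrom_measurableSet ?_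
      isCountablySpanning_measurableSet hspan).symm
    rw [BorelSpace.measurable_eq (α := ℝ), borel_eq_generateFrom_Iic]
  · rintro _ ⟨A, hA, _, ⟨x, rfl⟩, rfl⟩ _ ⟨B, hB, _, ⟨y, rfl⟩, rfl⟩ -
    rw [Set.prod_inter_prod, Set.Iic_inter_Iic]
    exact Set.mem_image2_of_mem (hA.inter hB) ⟨min x y, rfl⟩
  · rintro _ ⟨A, hA, _, ⟨x, rfl⟩, rfl⟩
    rw [Measure.map_apply hmeas (hA.prod measurableSet_Iic)]
    have hpre : (fun p : α × ℝ => (p.1, qf ρ p)) ⁻¹' (A ×ˢ Iic x) =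
        {p : α × ℝ | p.1 ∈ A ∧ qf ρ p ≤ x} := rfl
    rw [hpre, Measure.prod_apply]
    · have : ∀ a, unif (Prod.mk a ⁻¹' {p : α × ℝ | p.1 ∈ A ∧ qf ρ p ≤ x}) =
          A.indicator (fun a => ENNReal.ofReal (condCDF ρ a x)) a := by
        intro a
        by_cases ha : a ∈ A
        · rw [Set.indicator_of_mem ha, ← unif_qf_section ρ a x]
          congr 1
          ext u
          simp [ha]
        · rw [Set.indicator_of_notMem ha,
            show Prod.mk a ⁻¹' {p : α × ℝ | p.1 ∈ A ∧ qf ρ p ≤ x} = (∅ : Set ℝ) from by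
              ext u; simp [ha], measure_empty]
      simp_rw [this]
      rw [lintegral_indicator hA, setLIntegral_condCDF ρ x hA]
    · exact MeasurableSet.inter (measurable_fst hA)
        (measurableSet_le (measurable_qf ρ) measurable_const)
  · rw [Measure.map_apply hmeas MeasurableSet.univ, Set.preimage_univ,
      ← Set.univ_prod_univ, Measure.prod_prod, (measure_univ : unif Set.univ = 1), mul_one,
      Measure.fst_univ, Set.univ_prod_univ]

end Aux

/-- **Impossibility of identifying invariant features from the joint distribution.**
Given real-valued random variables `Xv` (invariant feature), `Xs` (spurious feature) and
label `Y` on a probability space, with observation `X = q (Xv, Xs)`, there is a probability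
space carrying `Xv', Xs', Y', η₁, η₂` and structural assignments `f₁', f₂'` such that
`η₁, η₂` are uniform on `(0,1)`, `Xv'` has the law of `Xs`, the required independences hold,
`Y' = f₁' (Xv', η₁)`, `Xs' = f₂' (Xv', Y', η₂)`, the joint law of `(Xv', Xs', Y')` equals
that of `(Xs, Xv, Y)`, and with `q' (a, b) := q (b, a)` the law of `(q' (Xv', Xs'), Y')`
equals the law of `(X, Y)`. -/
theorem impossibility_of_invariance_identification
    {Ω : Type} [MeasurableSpace Ω] (μ : Measure Ω) [IsProbabilityMeasure μ]
    {d : ℕ}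
    (Xv Xs Y : Ω → ℝ) (hXv : Measurable Xv) (hXs : Measurable Xs) (hY : Measurable Y)
    (q : ℝ × ℝ → Fin d → ℝ) (hq : Measurable q) :
    ∃ (Ω' : Type) (_ : MeasurableSpace Ω') (μ' : Measure Ω') (_ : IsProbabilityMeasure μ')
      (Xv' Xs' Y' η₁ η₂ : Ω' → ℝ) (f₁' : ℝ × ℝ → ℝ) (f₂' : ℝ × ℝ × ℝ → ℝ),
      Measurable Xv' ∧ Measurable Xs' ∧ Measurable Y' ∧ Measurable η₁ ∧ Measurable η₂ ∧
      Measurable f₁' ∧ Measurable f₂' ∧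
      Measure.map η₁ μ' = volume.restrict (Set.Ioo (0 : ℝ) 1) ∧
      Measure.map η₂ μ' = volume.restrict (Set.Ioo (0 : ℝ) 1) ∧
      Measure.map Xv' μ' = Measure.map Xs μ ∧
      IndepFun Xv' η₁ μ' ∧
      IndepFun (fun ω => (Xv' ω, η₁ ω)) η₂ μ' ∧
      (∀ ω, Y' ω = f₁' (Xv' ω, η₁ ω)) ∧
      (∀ ω, Xs' ω = f₂' (Xv' ω, Y' ω, η₂ ω)) ∧
      Measure.map (fun ω => (Xv' ω, Xs' ω, Y' ω)) μ' =
        Measure.map (fun ω => (Xs ω, Xv ω, Y ω)) μ ∧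
      Measure.map (fun ω => (q (Xs' ω, Xv' ω), Y' ω)) μ' =
        Measure.map (fun ω => (q (Xv ω, Xs ω), Y ω)) μ := by
  
  classical
  set ρ₁ : Measure ℝ := Measure.map Xs μ with hρ₁def
  set ρ : Measure (ℝ × ℝ) := Measure.map (fun ω => (Xs ω, Y ω)) μ with hρdef
  set σ' : Measure ((ℝ × ℝ) × ℝ) := Measure.map (fun ω => ((Xs ω, Y ω), Xv ω)) μ with hσdef
  have hXsY : Measurable fun ω => (Xs ω, Y ω) := hXs.prodMk hY
  have hσm : Measurable fun ω => ((Xs ω, Y ω), Xv ω) := hXsY.prodMk hXv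
  have hρP : IsProbabilityMeasure ρ := Measure.isProbabilityMeasure_map hXsY.aemeasurable
  have hρ₁P : IsProbabilityMeasure ρ₁ := Measure.isProbabilityMeasure_map hXs.aemeasurable
  have hσP : IsProbabilityMeasure σ' := Measure.isProbabilityMeasure_map hσm.aemeasurable
  have hρfst : ρ.fst = ρ₁ := Measure.fst_map_prodMk hY
  have hσfst : σ'.fst = ρ := Measure.fst_map_prodMk hXv
  set μ' : Measure ((ℝ × ℝ) × ℝ) := (ρ₁.prod unif).prod unif with hμ'def
  have hμ'P : IsProbabilityMeasure μ' := by infer_instance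
  -- measurable pieces
  have hqf1 : Measurable (qf ρ) := measurable_qf ρ
  have hqf2 : Measurable (qf σ') := measurable_qf σ'
  have hXv'm : Measurable (fun ω : (ℝ × ℝ) × ℝ => ω.1.1) :=
    measurable_fst.comp measurable_fst
  have hη₁m : Measurable (fun ω : (ℝ × ℝ) × ℝ => ω.1.2) :=
    measurable_snd.comp measurable_fst
  have hY'm : Measurable (fun ω : (ℝ × ℝ) × ℝ => qf ρ ω.1) := hqf1.comp measurable_fst
  have hmidm : Measurable (fun ω : (ℝ × ℝ) × ℝ => ((ω.1.1, qf ρ ω.1), ω.2)) :=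
    ((hXv'm.prodMk hY'm)).prodMk measurable_snd
  have hXs'm : Measurable (fun ω : (ℝ × ℝ) × ℝ => qf σ' ((ω.1.1, qf ρ ω.1), ω.2)) :=
    hqf2.comp hmidm
  have hf₂m : Measurable (fun t : ℝ × ℝ × ℝ => qf σ' ((t.1, t.2.1), t.2.2)) :=
    hqf2.comp ((measurable_fst.prodMk (measurable_fst.comp measurable_snd)).prodMk
      (measurable_snd.comp measurable_snd))
  -- marginal laws
  have hmapfst : Measure.map Prod.fst μ' = ρ₁.prod unif := by
    rw [hμ'def, Measure.map_fst_prod, measure_univ, one_smul]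
  have hmapXv' : Measure.map (fun ω : (ℝ × ℝ) × ℝ => ω.1.1) μ' = ρ₁ := by
    rw [show (fun ω : (ℝ × ℝ) × ℝ => ω.1.1) = Prod.fst ∘ Prod.fst from rfl,
      ← Measure.map_map measurable_fst measurable_fst, hmapfst, Measure.map_fst_prod,
      measure_univ, one_smul]
  have hmapη₁ : Measure.map (fun ω : (ℝ × ℝ) × ℝ => ω.1.2) μ' = unif := by
    rw [show (fun ω : (ℝ × ℝ) × ℝ => ω.1.2) = Prod.snd ∘ Prod.fst from rfl,
      ← Measure.map_map measurable_snd measurable_fst, hmapfst, Measure.map_snd_prod,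
      measure_univ, one_smul]
  have hmapη₂ : Measure.map Prod.snd μ' = unif := by
    rw [hμ'def, Measure.map_snd_prod, measure_univ, one_smul]
  -- key joint law computations
  have h1 : Measure.map (fun p : ℝ × ℝ => (p.1, qf ρ p)) (ρ₁.prod unif) = ρ := by
    rw [← hρfst]; exact map_qf ρ
  have h2 : Measure.map (fun p : (ℝ × ℝ) × ℝ => (p.1, qf σ' p)) (ρ.prod unif) = σ' := by
    rw [← hσfst]; exact map_qf σ'
  have hmid : Measure.map (fun ω : (ℝ × ℝ) × ℝ => ((ω.1.1, qf ρ ω.1), ω.2)) μ'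
      = ρ.prod unif := by
    rw [show (fun ω : (ℝ × ℝ) × ℝ => ((ω.1.1, qf ρ ω.1), ω.2))
        = Prod.map (fun p : ℝ × ℝ => (p.1, qf ρ p)) id from rfl, hμ'def,
      ← Measure.map_prod_map _ _ (measurable_fst.prodMk hqf1) measurable_id, h1,
      Measure.map_id]
  have hkey : Measure.map
      (fun ω : (ℝ × ℝ) × ℝ => ((ω.1.1, qf ρ ω.1), qf σ' ((ω.1.1, qf ρ ω.1), ω.2))) μ'
      = σ' := by
    rw [show (fun ω : (ℝ × ℝ) × ℝ => ((ω.1.1, qf ρ ω.1), qf σ' ((ω.1.1, qf ρ ω.1), ω.2)))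
        = (fun p : (ℝ × ℝ) × ℝ => (p.1, qf σ' p)) ∘
          (fun ω : (ℝ × ℝ) × ℝ => ((ω.1.1, qf ρ ω.1), ω.2)) from rfl,
      ← Measure.map_map (measurable_fst.prodMk hqf2) hmidm, hmid, h2]
  refine ⟨(ℝ × ℝ) × ℝ, inferInstance, μ', hμ'P,
    (fun ω => ω.1.1), (fun ω => qf σ' ((ω.1.1, qf ρ ω.1), ω.2)), (fun ω => qf ρ ω.1),
    (fun ω => ω.1.2), (fun ω => ω.2),
    qf ρ, (fun t => qf σ' ((t.1, t.2.1), t.2.2)),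
    hXv'm, hXs'm, hY'm, hη₁m, measurable_snd, hqf1, hf₂m,
    hmapη₁, hmapη₂, hmapXv', ?_, ?_, fun ω => rfl, fun ω => rfl, ?_, ?_⟩
  · -- IndepFun Xv' η₁
    rw [indepFun_iff_map_prod_eq_prod_map_map hXv'm.aemeasurable hη₁m.aemeasurable]
    rw [show (fun ω : (ℝ × ℝ) × ℝ => (ω.1.1, ω.1.2)) = (Prod.fst : (ℝ × ℝ) × ℝ → ℝ × ℝ)
        from rfl, hmapfst, hmapXv', hmapη₁]
  · -- IndepFun (Xv', η₁) η₂
    rw [indepFun_iff_map_prod_eq_prod_map_map (hXv'm.prodMk hη₁m).aemeasurable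
      measurable_snd.aemeasurable]
    rw [show (fun ω : (ℝ × ℝ) × ℝ => ((ω.1.1, ω.1.2), ω.2)) = id from rfl, Measure.map_id,
      show Measure.map (fun ω : (ℝ × ℝ) × ℝ => (ω.1.1, ω.1.2)) μ' = ρ₁.prod unif from hmapfst,
      hmapη₂]
  · -- joint law of the triple
    have hr : Measurable (fun p : (ℝ × ℝ) × ℝ => (p.1.1, p.2, p.1.2)) :=
      (measurable_fst.comp measurable_fst).prodMk
        (measurable_snd.prodMk (measurable_snd.comp measurable_fst))
    have lhs : (fun ω : (ℝ × ℝ) × ℝ =>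
        (ω.1.1, qf σ' ((ω.1.1, qf ρ ω.1), ω.2), qf ρ ω.1))
        = (fun p : (ℝ × ℝ) × ℝ => (p.1.1, p.2, p.1.2)) ∘
          (fun ω : (ℝ × ℝ) × ℝ => ((ω.1.1, qf ρ ω.1), qf σ' ((ω.1.1, qf ρ ω.1), ω.2))) := rfl
    have rhs : (fun ω : Ω => (Xs ω, Xv ω, Y ω))
        = (fun p : (ℝ × ℝ) × ℝ => (p.1.1, p.2, p.1.2)) ∘
          (fun ω : Ω => ((Xs ω, Y ω), Xv ω)) := rfl
    rw [lhs, rhs, ← Measure.map_map hr ((hXv'm.prodMk hY'm).prodMk hXs'm), hkey, hσdef,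
      Measure.map_map hr hσm]
  · -- observed joint law
    have hh : Measurable (fun p : (ℝ × ℝ) × ℝ => (q (p.2, p.1.1), p.1.2)) :=
      (hq.comp (measurable_snd.prodMk (measurable_fst.comp measurable_fst))).prodMk
        (measurable_snd.comp measurable_fst)
    have lhs : (fun ω : (ℝ × ℝ) × ℝ =>
        (q (qf σ' ((ω.1.1, qf ρ ω.1), ω.2), ω.1.1), qf ρ ω.1))
        = (fun p : (ℝ × ℝ) × ℝ => (q (p.2, p.1.1), p.1.2)) ∘
          (fun ω : (ℝ × ℝ) × ℝ => ((ω.1.1, qf ρ ω.1), qf σ' ((ω.1.1, qf ρ ω.1), ω.2))) := rfl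
    have rhs : (fun ω : Ω => (q (Xv ω, Xs ω), Y ω))
        = (fun p : (ℝ × ℝ) × ℝ => (q (p.2, p.1.1), p.1.2)) ∘
          (fun ω : Ω => ((Xs ω, Y ω), Xv ω)) := rfl
    rw [lhs, rhs, ← Measure.map_map hh ((hXv'm.prodMk hY'm).prodMk hXs'm), hkey, hσdef,
      Measure.map_map hh hσm]
end

section
/- Let W be a random variable valued in a measurable space α and Y a real-valued random variable, both on a common probability space, and let η be a random variable uniformly distributed on (0,1) and independent of W. Let F(w, y) denote the conditional cumulative distribution function of Y given W = w (the conditional CDF associated with the joint law of (W, Y) on α × ℝ), and define Y'(ω) := inf{ y ∈ ℝ : F(W(ω), y) ≥ η(ω) }. Then the joint law of (W, Y') equals the joint law of (W, Y); in particular, P(Y' ≤ y | W) = P(Y ≤ y | W) almost surely for every y ∈ ℝ. -/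
/-!
For `u ∈ (0,1)`, right continuity of a distribution function `F` gives
`inf {y | u ≤ F y} ≤ t ↔ u ≤ F t`. Hence, writing `F_w` for the conditional CDF,
`P(W ∈ s, Y' ≤ t) = P(W ∈ s, η ≤ F_W(t)) = ∫_s F_w(t) dP_W(w) = P(W ∈ s, Y ≤ t)`,
the middle step by independence and uniformity of `η`. Rectangles `s × (-∞, t]` determine a
finite measure on `α × ℝ`, so `(W, Y')` and `(W, Y)` have the same law, and conditional
expectations given `W` only depend on that joint law.
-/

open MeasureTheory ProbabilityTheory Set Filter Topology

namespace StieltjesFunction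

noncomputable def quantile (F : StieltjesFunction ℝ) (u : ℝ) : ℝ := sInf {y | u ≤ F y}

theorem quantile_le_iff (F : StieltjesFunction ℝ) (hbot : Tendsto F atBot (𝓝 0))
    (htop : Tendsto F atTop (𝓝 1)) {u : ℝ} (hu : u ∈ Ioo 0 1) (t : ℝ) :
    F.quantile u ≤ t ↔ u ≤ F t := by
  have hne : {y | u ≤ F y}.Nonempty :=
    (htop.eventually_const_lt hu.2).exists.imp fun _ ↦ le_of_lt
  have hbdd : BddBelow {y | u ≤ F y} := by
    obtain ⟨z, hz⟩ := eventually_atBot.mp (hbot.eventually_lt_const hu.1)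
    exact ⟨z, fun y hy ↦ le_of_not_ge fun hyz ↦ (hz y hyz).not_ge hy⟩
  refine ⟨fun hle ↦ ?_, fun h ↦ csInf_le hbdd h⟩
  have hright : ∀ z, t < z → u ≤ F z := fun z hz ↦ by
    obtain ⟨y, hy, hyz⟩ := (csInf_lt_iff hbdd hne).mp (hle.trans_lt hz)
    exact hy.trans (F.mono hyz.le)
  exact ge_of_tendsto
    ((F.right_continuous t).tendsto.mono_left (nhdsWithin_mono t Ioi_subset_Ici_self))
    (eventually_mem_nhdsWithin.mono hright)

end StieltjesFunction

theorem Real.volume_restrict_Ioo_zero_one_Iic {c : ℝ} (hc : c ≤ 1) :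
    volume.restrict (Ioo (0 : ℝ) 1) (Iic c) = ENNReal.ofReal c := by
  rw [Measure.restrict_congr_set Ioo_ae_eq_Ioc, Measure.restrict_apply measurableSet_Iic,
    inter_comm, Ioc_inter_Iic, Real.volume_Ioc, inf_eq_right.mpr hc, sub_zero]

namespace MeasureTheory.Measure

theorem ext_prod_Iic {α : Type*} [MeasurableSpace α] {μ ν : Measure (α × ℝ)} [IsFiniteMeasure μ]
    (h : ∀ {s : Set α}, MeasurableSet s → ∀ t, μ (s ×ˢ Iic t) = ν (s ×ˢ Iic t)) : μ = ν := by
  have hrect : ∀ (κ : Measure (α × ℝ)) (s : Set α) {t : Set ℝ}, MeasurableSet t →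
      (κ.restrict (s ×ˢ univ)).snd t = κ (s ×ˢ t) := fun κ s t ht ↦ by
    rw [snd_apply ht, restrict_apply (measurable_snd ht), ← univ_prod, prod_inter_prod,
      univ_inter, inter_univ]
  refine ext_prod fun {s t} hs ht ↦ ?_
  rw [← hrect μ s ht, ← hrect ν s ht]
  congr 1
  exact ext_of_Iic _ _ fun t ↦ by
    rw [hrect μ s measurableSet_Iic, hrect ν s measurableSet_Iic, h hs]

theorem prod_restrict_Ioo_zero_one_setOf_le {α : Type*} [MeasurableSpace α]
    (ν : Measure α) [SFinite ν] {g : α → ℝ} (hg : Measurable g) (hg1 : ∀ w, g w ≤ 1)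
    (s : Set α) :
    (ν.prod (volume.restrict (Ioo (0 : ℝ) 1))) {p | p.1 ∈ s ∧ p.2 ≤ g p.1} =
      ∫⁻ w in s, ENNReal.ofReal (g w) ∂ν := by
  have hC : MeasurableSet {p : α × ℝ | p.2 ≤ g p.1} :=
    measurableSet_le measurable_snd (hg.comp measurable_fst)
  have hset : {p : α × ℝ | p.1 ∈ s ∧ p.2 ≤ g p.1} = {p | p.2 ≤ g p.1} ∩ s ×ˢ univ := by
    ext p
    simp [and_comm]
  rw [hset, ← restrict_apply hC, ← prod_restrict, restrict_univ, prod_apply hC]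
  exact lintegral_congr fun w ↦ Real.volume_restrict_Ioo_zero_one_Iic (hg1 w)

end MeasureTheory.Measure

theorem ProbabilityTheory.condExp_comp_ae_eq_of_map_prodMk_eq {Ω α β E : Type*}
    {mΩ : MeasurableSpace Ω} {mα : MeasurableSpace α} [MeasurableSpace β] [StandardBorelSpace β]
    [Nonempty β] [NormedAddCommGroup E] [NormedSpace ℝ E] [CompleteSpace E]
    {μ : Measure Ω} [IsFiniteMeasure μ] {X : Ω → α} {Y Y' : Ω → β}
    (hX : Measurable X) (hY : AEMeasurable Y μ) (hY' : AEMeasurable Y' μ)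
    (hmap : μ.map (fun ω ↦ (X ω, Y' ω)) = μ.map (fun ω ↦ (X ω, Y ω)))
    {f : β → E} (hf : StronglyMeasurable f) (hf_int : Integrable (fun ω ↦ f (Y ω)) μ) :
    μ[fun ω ↦ f (Y' ω) | mα.comap X] =ᵐ[μ] μ[fun ω ↦ f (Y ω) | mα.comap X] := by
  have hcond : condDistrib Y' X μ = condDistrib Y X μ := by
    simp only [condDistrib_def, hmap]
  have hlaw : μ.map Y' = μ.map Y := by
    rw [← Measure.snd_map_prodMk hX, hmap, Measure.snd_map_prodMk hX]
  have hf_int' : Integrable (fun ω ↦ f (Y' ω)) μ :=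
    (integrable_map_measure hf.aestronglyMeasurable hY').mp
      (hlaw ▸ (integrable_map_measure hf.aestronglyMeasurable hY).mpr hf_int)
  refine (condExp_ae_eq_integral_condDistrib hX hY' hf hf_int').trans ?_
  rw [hcond]
  exact (condExp_ae_eq_integral_condDistrib hX hY hf hf_int).symm

section CondCDFQuantile

variable {Ω α : Type*} {mΩ : MeasurableSpace Ω} [MeasurableSpace α] (ρ : Measure (α × ℝ))
  {W : Ω → α} {U : Ω → ℝ}

theorem condCDF_quantile_le_iff {u : ℝ} (hu : u ∈ Ioo 0 1) (a : α) (t : ℝ) :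
    (condCDF ρ a).quantile u ≤ t ↔ u ≤ condCDF ρ a t :=
  (condCDF ρ a).quantile_le_iff (tendsto_condCDF_atBot ρ a) (tendsto_condCDF_atTop ρ a) hu t

theorem measurable_condCDF_quantile (hW : Measurable W) (hU : Measurable U)
    (hU01 : ∀ ω, U ω ∈ Ioo 0 1) : Measurable fun ω ↦ (condCDF ρ (W ω)).quantile (U ω) := by
  refine measurable_of_Iic fun t ↦ ?_
  have hpre : (fun ω ↦ (condCDF ρ (W ω)).quantile (U ω)) ⁻¹' Iic t =
      {ω | U ω ≤ condCDF ρ (W ω) t} := ext fun ω ↦ condCDF_quantile_le_iff ρ (hU01 ω) (W ω) t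
  rw [hpre]
  exact measurableSet_le hU ((measurable_condCDF ρ t).comp hW)

theorem map_prodMk_condCDF_quantile [IsFiniteMeasure ρ] {μ : Measure Ω}
    (hW : Measurable W) (hU : Measurable U) (hU01 : ∀ ω, U ω ∈ Ioo 0 1)
    (hlaw : μ.map (fun ω ↦ (W ω, U ω)) = ρ.fst.prod (volume.restrict (Ioo (0 : ℝ) 1))) :
    μ.map (fun ω ↦ (W ω, (condCDF ρ (W ω)).quantile (U ω))) = ρ := by
  refine (Measure.ext_prod_Iic fun {s} hs t ↦ ?_).symm
  have hC : MeasurableSet {p : α × ℝ | p.1 ∈ s ∧ p.2 ≤ condCDF ρ p.1 t} :=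
    (measurable_fst hs).inter
      (measurableSet_le measurable_snd ((measurable_condCDF ρ t).comp measurable_fst))
  have hpre : (fun ω ↦ (W ω, (condCDF ρ (W ω)).quantile (U ω))) ⁻¹' (s ×ˢ Iic t) =
      (fun ω ↦ (W ω, U ω)) ⁻¹' {p | p.1 ∈ s ∧ p.2 ≤ condCDF ρ p.1 t} :=
    ext fun ω ↦ and_congr_right' (condCDF_quantile_le_iff ρ (hU01 ω) (W ω) t)
  rw [← setLIntegral_condCDF ρ t hs, ← Measure.prod_restrict_Ioo_zero_one_setOf_le ρ.fst
      (measurable_condCDF ρ t) (condCDF_le_one ρ · t), ← hlaw, Measure.map_apply (hW.prodMk hU) hC,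
    Measure.map_apply (hW.prodMk (measurable_condCDF_quantile ρ hW hU hU01))
      (hs.prod measurableSet_Iic), hpre]

end CondCDFQuantile

/-- **Conditional inverse-CDF transform.** If `η` is uniform on `(0,1)` and independent of `W`,
and `Y'` is defined as the generalized inverse of the conditional CDF of `Y` given `W`
evaluated at `η`, then `(W, Y')` has the same joint law as `(W, Y)`; in particular
`P(Y' ≤ y | W) = P(Y ≤ y | W)` almost surely for every `y`. -/
theorem conditional_inverse_cdf_transform
    {Ω α : Type*} [MeasurableSpace Ω] [MeasurableSpace α]
    (μ : Measure Ω) [IsProbabilityMeasure μ]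
    (W : Ω → α) (Y η : Ω → ℝ)
    (hW : Measurable W) (hY : Measurable Y) (hη : Measurable η)
    (hunif : Measure.map η μ = volume.restrict (Set.Ioo (0 : ℝ) 1))
    (hindep : IndepFun W η μ)
    (Y' : Ω → ℝ)
    (hY'def : ∀ ω, Y' ω =
      sInf {y : ℝ | η ω ≤ condCDF (Measure.map (fun ω' => (W ω', Y ω')) μ) (W ω) y}) :
    Measure.map (fun ω => (W ω, Y' ω)) μ = Measure.map (fun ω => (W ω, Y ω)) μ ∧
    ∀ y : ℝ,
      μ[({ω | Y' ω ≤ y}).indicator (fun _ => (1 : ℝ)) | MeasurableSpace.comap W ‹_›] =ᵐ[μ]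
        μ[({ω | Y ω ≤ y}).indicator (fun _ => (1 : ℝ)) | MeasurableSpace.comap W ‹_›] := by
  set ρ := μ.map fun ω ↦ (W ω, Y ω)
  -- `η` lies in `(0,1)` only almost surely; `U` is a version of it that does so everywhere.
  let U : Ω → ℝ := fun ω ↦ if η ω ∈ Ioo 0 1 then η ω else 2⁻¹
  have hU : Measurable U := Measurable.ite (hη measurableSet_Ioo) hη measurable_const
  have hU01 : ∀ ω, U ω ∈ Ioo 0 1 := fun ω ↦ by
    simp only [U]
    split_ifs with h
    exacts [h, ⟨by norm_num, by norm_num⟩]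
  have hUη : U =ᵐ[μ] η := by
    filter_upwards [(ae_map_iff hη.aemeasurable measurableSet_Ioo).mp
      (hunif ▸ ae_restrict_mem measurableSet_Ioo)] with ω h
    exact if_pos h
  have hlaw : μ.map (fun ω ↦ (W ω, U ω)) = ρ.fst.prod (volume.restrict (Ioo (0 : ℝ) 1)) := by
    rw [Measure.map_congr ((EventuallyEq.refl _ W).prodMk hUη),
      (indepFun_iff_map_prod_eq_prod_map_map hW.aemeasurable hη.aemeasurable).mp hindep, hunif,
      Measure.fst_map_prodMk hY]
  have hY'U : Y' =ᵐ[μ] fun ω ↦ (condCDF ρ (W ω)).quantile (U ω) := by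
    filter_upwards [hUη] with ω h
    rw [hY'def, h]
    rfl
  have hmap : μ.map (fun ω ↦ (W ω, Y' ω)) = ρ := by
    rw [Measure.map_congr ((EventuallyEq.refl _ W).prodMk hY'U)]
    exact map_prodMk_condCDF_quantile ρ hW hU hU01 hlaw
  exact ⟨hmap, fun y ↦ condExp_comp_ae_eq_of_map_prodMk_eq hW hY.aemeasurable
    ((measurable_condCDF_quantile ρ hW hU hU01).aemeasurable.congr hY'U.symm) hmap
    (stronglyMeasurable_const.indicator measurableSet_Iic)
    ((integrable_const 1).indicator (hY measurableSet_Iic))⟩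
end

section
/- Consider two data generation processes on {0,1}-valued variables. Process A: jointly independent X₁ ~ Bernoulli(1/2), N_v ~ Bernoulli(1/4), and (E, N_s) with E uniform on {1,2}, P(N_s = 1 | E = 1) = 0.2, P(N_s = 1 | E = 2) = 0.1; set Y := X₁ ⊕ N_v and X₂ := Y ⊕ N_s. Process B: jointly independent X₂ ~ Bernoulli(1/2), N_v' ~ Bernoulli(0.15), and (E', N_s') with E' uniform on {1,2}, P(N_s' = 1 | E' = 1) = 0.2, P(N_s' = 1 | E' = 2) = 0.3; set Y := X₂ ⊕ N_v' and X₁ := Y ⊕ N_s'. Then the joint law of (X₁, X₂, Y) under Process A equals the joint law of (X₁, X₂, Y) under Process B, even though in Process A the direct cause of Y is X₁ while in Process B the direct cause of Y is X₂. -/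
open MeasureTheory ProbabilityTheory

instance : MeasurableSpace (ZMod 2) := ⊤
instance : MeasurableSingletonClass (ZMod 2) := ⟨fun _ => trivial⟩

section AuxCE

open scoped ENNReal

lemma auxCE_ne_top_div (p q : ℕ) (hq : q ≠ 0) : ((p : ℝ≥0∞)/(q : ℝ≥0∞)) ≠ ⊤ := by
  simp [ENNReal.div_eq_top, hq]

lemma auxCE_num1 : (1/2 : ℝ≥0∞) * (2/10) + 1/2 * (3/10) = 1/4 := by
  have t1 : (1/2 : ℝ≥0∞) * (2/10) ≠ ⊤ :=
    ENNReal.mul_ne_top (by exact_mod_cast auxCE_ne_top_div 1 2 (by norm_num))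
      (by exact_mod_cast auxCE_ne_top_div 2 10 (by norm_num))
  have t2 : (1/2 : ℝ≥0∞) * (3/10) ≠ ⊤ :=
    ENNReal.mul_ne_top (by exact_mod_cast auxCE_ne_top_div 1 2 (by norm_num))
      (by exact_mod_cast auxCE_ne_top_div 3 10 (by norm_num))
  rw [← ENNReal.toReal_eq_toReal_iff' (ENNReal.add_ne_top.2 ⟨t1, t2⟩)
    (by exact_mod_cast auxCE_ne_top_div 1 4 (by norm_num))]
  rw [ENNReal.toReal_add t1 t2]
  simp [ENNReal.toReal_mul, ENNReal.toReal_div]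
  norm_num

lemma auxCE_num2 : (1/2 : ℝ≥0∞) * (2/10) + 1/2 * (1/10) = 15/100 := by
  have t1 : (1/2 : ℝ≥0∞) * (2/10) ≠ ⊤ :=
    ENNReal.mul_ne_top (by exact_mod_cast auxCE_ne_top_div 1 2 (by norm_num))
      (by exact_mod_cast auxCE_ne_top_div 2 10 (by norm_num))
  have t2 : (1/2 : ℝ≥0∞) * (1/10) ≠ ⊤ :=
    ENNReal.mul_ne_top (by exact_mod_cast auxCE_ne_top_div 1 2 (by norm_num))
      (by exact_mod_cast auxCE_ne_top_div 1 10 (by norm_num))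
  rw [← ENNReal.toReal_eq_toReal_iff' (ENNReal.add_ne_top.2 ⟨t1, t2⟩)
    (by exact_mod_cast auxCE_ne_top_div 15 100 (by norm_num))]
  rw [ENNReal.toReal_add t1 t2]
  simp [ENNReal.toReal_mul, ENNReal.toReal_div]
  norm_num

lemma auxCE_zmodA : ∀ x n s a b c : ZMod 2,
    (x = a ∧ x + n + s = b ∧ x + n = c) ↔ ((x = a ∧ n = a + c) ∧ s = b + c) := by decide

lemma auxCE_zmodB : ∀ x n s a b c : ZMod 2,
    (x + n + s = a ∧ x = b ∧ x + n = c) ↔ ((x = b ∧ n = b + c) ∧ s = a + c) := by decide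

variable {Ω : Type*} [MeasurableSpace Ω]

lemma auxCE_compl (μ : Measure Ω) [IsProbabilityMeasure μ] {f : Ω → ZMod 2}
    (hf : Measurable f) : μ {ω | f ω = 0} = 1 - μ {ω | f ω = 1} := by
  have hs : {ω | f ω = 0} = {ω | f ω = 1}ᶜ := by
    ext ω
    have : ∀ x : ZMod 2, x = 0 ↔ ¬ x = 1 := by decide
    simpa using this (f ω)
  have hm : MeasurableSet {ω | f ω = 1} := hf (measurableSet_singleton 1)
  rw [hs, measure_compl hm (measure_ne_top μ _), measure_univ]

lemma auxCE_indep (μ : Measure Ω) (X Nv Ns : Ω → ZMod 2) (E : Ω → Fin 2)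
    (hX : Measurable X) (hNv : Measurable Nv) (hNs : Measurable Ns) (hE : Measurable E)
    (hindep : ∀ (a b : ZMod 2) (c : Fin 2 × ZMod 2),
      μ ({ω | X ω = a} ∩ {ω | Nv ω = b} ∩ {ω | (E ω, Ns ω) = c}) =
        μ {ω | X ω = a} * μ {ω | Nv ω = b} * μ {ω | (E ω, Ns ω) = c})
    (a b s : ZMod 2) :
    μ ({ω | X ω = a} ∩ {ω | Nv ω = b} ∩ {ω | Ns ω = s}) =
      μ {ω | X ω = a} * μ {ω | Nv ω = b} * μ {ω | Ns ω = s} := by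
  have hpair : ∀ c : Fin 2 × ZMod 2, MeasurableSet {ω | (E ω, Ns ω) = c} :=
    fun c => (hE.prodMk hNs) (measurableSet_singleton c)
  have hfin : ∀ x : Fin 2, x = 0 ∨ x = 1 := by decide
  have hsplit : {ω | Ns ω = s} =
      {ω | (E ω, Ns ω) = ((0 : Fin 2), s)} ∪ {ω | (E ω, Ns ω) = ((1 : Fin 2), s)} := by
    ext ω
    simp only [Set.mem_setOf_eq, Set.mem_union, Prod.mk.injEq]
    have := hfin (E ω)
    tauto
  have hdisj : Disjoint {ω | (E ω, Ns ω) = ((0 : Fin 2), s)}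
      {ω | (E ω, Ns ω) = ((1 : Fin 2), s)} := by
    rw [Set.disjoint_left]
    rintro ω h1 h2
    simp only [Set.mem_setOf_eq, Prod.mk.injEq] at h1 h2
    exact absurd (h1.1 ▸ h2.1) (by decide)
  have hT : MeasurableSet ({ω | X ω = a} ∩ {ω | Nv ω = b}) :=
    (hX (measurableSet_singleton a)).inter (hNv (measurableSet_singleton b))
  have hdisj2 : Disjoint ({ω | X ω = a} ∩ {ω | Nv ω = b} ∩ {ω | (E ω, Ns ω) = ((0 : Fin 2), s)})
      ({ω | X ω = a} ∩ {ω | Nv ω = b} ∩ {ω | (E ω, Ns ω) = ((1 : Fin 2), s)}) := by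
    rw [Set.disjoint_left]
    rintro ω ⟨-, h1⟩ ⟨-, h2⟩
    exact hdisj.le_bot ⟨h1, h2⟩
  rw [hsplit, Set.inter_union_distrib_left,
    measure_union hdisj2 (hT.inter (hpair _)),
    measure_union hdisj (hpair _), hindep a b ((0 : Fin 2), s), hindep a b ((1 : Fin 2), s),
    mul_add]

lemma auxCE_ns (μ : Measure Ω) [IsProbabilityMeasure μ] (Ns : Ω → ZMod 2) (E : Ω → Fin 2)
    (hNs : Measurable Ns) (hE : Measurable E)
    (hElaw : μ {ω | E ω = 0} = 1/2) (c0 c1 : ℝ≥0∞)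
    (hc0 : ProbabilityTheory.cond μ {ω | E ω = 0} {ω | Ns ω = 1} = c0)
    (hc1 : ProbabilityTheory.cond μ {ω | E ω = 1} {ω | Ns ω = 1} = c1) :
    μ {ω | Ns ω = 1} = 1/2 * c0 + 1/2 * c1 := by
  have hE1 : μ {ω | E ω = 1} = 1/2 := by
    have hs : {ω | E ω = (1 : Fin 2)} = {ω | E ω = 0}ᶜ := by
      ext ω
      have : ∀ x : Fin 2, x = 1 ↔ ¬ x = 0 := by decide
      simpa using this (E ω)
    have hm0 : MeasurableSet {ω | E ω = (0 : Fin 2)} := hE (measurableSet_singleton 0)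
    rw [hs, measure_compl hm0 (measure_ne_top μ _), measure_univ, hElaw]
    norm_num
  have key : ∀ (e : Fin 2) (c : ℝ≥0∞),
      ProbabilityTheory.cond μ {ω | E ω = e} {ω | Ns ω = 1} = c →
      μ {ω | E ω = e} = 1/2 →
      μ ({ω | E ω = e} ∩ {ω | Ns ω = 1}) = 1/2 * c := by
    intro e c hc he
    have hme : MeasurableSet {ω | E ω = e} := hE (measurableSet_singleton e)
    rw [ProbabilityTheory.cond_apply hme] at hc
    have h0 : μ {ω | E ω = e} ≠ 0 := by rw [he]; norm_num
    calc μ ({ω | E ω = e} ∩ {ω | Ns ω = 1})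
        = μ {ω | E ω = e} * ((μ {ω | E ω = e})⁻¹ * μ ({ω | E ω = e} ∩ {ω | Ns ω = 1})) := by
          rw [← mul_assoc, ENNReal.mul_inv_cancel h0 (measure_ne_top μ _), one_mul]
      _ = 1/2 * c := by rw [hc, he]
  have hfin : ∀ x : Fin 2, x = 0 ∨ x = 1 := by decide
  have hsplit : {ω | Ns ω = 1} =
      ({ω | E ω = (0 : Fin 2)} ∩ {ω | Ns ω = 1}) ∪ ({ω | E ω = (1 : Fin 2)} ∩ {ω | Ns ω = 1}) := by
    ext ω
    simp only [Set.mem_setOf_eq, Set.mem_union, Set.mem_inter_iff]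
    have := hfin (E ω)
    tauto
  have hdisj : Disjoint ({ω | E ω = (0 : Fin 2)} ∩ {ω | Ns ω = 1})
      ({ω | E ω = (1 : Fin 2)} ∩ {ω | Ns ω = 1}) := by
    rw [Set.disjoint_left]
    rintro ω ⟨h1, _⟩ ⟨h2, _⟩
    simp only [Set.mem_setOf_eq] at h1 h2
    exact absurd (h1 ▸ h2) (by decide)
  rw [hsplit, measure_union hdisj
      ((hE (measurableSet_singleton 1)).inter (hNs (measurableSet_singleton 1))),
    key 0 c0 hc0 hElaw, key 1 c1 hc1 hE1]

end AuxCE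

/-- **Counter-example of Section 4: two structural causal models with different invariant
features induce the same observed joint distribution.** Process A generates `Y` from `X₁`
(so `X₁` is the direct cause of `Y`), Process B generates `Y` from `X₂`; nevertheless the
joint law of `(X₁, X₂, Y)` is identical under the two processes. -/
theorem counterexample_same_joint_law
    -- Process A
    {ΩA : Type*} [MeasurableSpace ΩA] (μA : Measure ΩA) [IsProbabilityMeasure μA]
    (X₁A NvA NsA : ΩA → ZMod 2) (EA : ΩA → Fin 2)
    (hX₁A : Measurable X₁A) (hNvA : Measurable NvA) (hNsA : Measurable NsA)
    (hEA : Measurable EA)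
    (hindepA : ∀ (a b : ZMod 2) (c : Fin 2 × ZMod 2),
      μA ({ω | X₁A ω = a} ∩ {ω | NvA ω = b} ∩ {ω | (EA ω, NsA ω) = c}) =
        μA {ω | X₁A ω = a} * μA {ω | NvA ω = b} * μA {ω | (EA ω, NsA ω) = c})
    (hX₁Alaw : μA {ω | X₁A ω = 1} = 1 / 2)
    (hNvAlaw : μA {ω | NvA ω = 1} = 1 / 4)
    (hEAlaw : μA {ω | EA ω = 0} = 1 / 2)
    (hNsAE0 : ProbabilityTheory.cond μA {ω | EA ω = 0} {ω | NsA ω = 1} = 2 / 10)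
    (hNsAE1 : ProbabilityTheory.cond μA {ω | EA ω = 1} {ω | NsA ω = 1} = 1 / 10)
    (YA X₂A : ΩA → ZMod 2)
    (hYAdef : ∀ ω, YA ω = X₁A ω + NvA ω)
    (hX₂Adef : ∀ ω, X₂A ω = YA ω + NsA ω)
    -- Process B
    {ΩB : Type*} [MeasurableSpace ΩB] (μB : Measure ΩB) [IsProbabilityMeasure μB]
    (X₂B NvB NsB : ΩB → ZMod 2) (EB : ΩB → Fin 2)
    (hX₂B : Measurable X₂B) (hNvB : Measurable NvB) (hNsB : Measurable NsB)
    (hEB : Measurable EB)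
    (hindepB : ∀ (a b : ZMod 2) (c : Fin 2 × ZMod 2),
      μB ({ω | X₂B ω = a} ∩ {ω | NvB ω = b} ∩ {ω | (EB ω, NsB ω) = c}) =
        μB {ω | X₂B ω = a} * μB {ω | NvB ω = b} * μB {ω | (EB ω, NsB ω) = c})
    (hX₂Blaw : μB {ω | X₂B ω = 1} = 1 / 2)
    (hNvBlaw : μB {ω | NvB ω = 1} = 15 / 100)
    (hEBlaw : μB {ω | EB ω = 0} = 1 / 2)
    (hNsBE0 : ProbabilityTheory.cond μB {ω | EB ω = 0} {ω | NsB ω = 1} = 2 / 10)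
    (hNsBE1 : ProbabilityTheory.cond μB {ω | EB ω = 1} {ω | NsB ω = 1} = 3 / 10)
    (YB X₁B : ΩB → ZMod 2)
    (hYBdef : ∀ ω, YB ω = X₂B ω + NvB ω)
    (hX₁Bdef : ∀ ω, X₁B ω = YB ω + NsB ω) :
    Measure.map (fun ω => (X₁A ω, X₂A ω, YA ω)) μA =
      Measure.map (fun ω => (X₁B ω, X₂B ω, YB ω)) μB := by
  classical
  have hz2 : ∀ x : ZMod 2, x = 0 ∨ x = 1 := by decide
  -- marginal of Ns in each process
  have hNsA1 : μA {ω | NsA ω = 1} = 15/100 := by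
    rw [auxCE_ns μA NsA EA hNsA hEA hEAlaw _ _ hNsAE0 hNsAE1]; exact auxCE_num2
  have hNsB1 : μB {ω | NsB ω = 1} = 1/4 := by
    rw [auxCE_ns μB NsB EB hNsB hEB hEBlaw _ _ hNsBE0 hNsBE1]; exact auxCE_num1
  -- matching of marginals
  have hm1 : ∀ v : ZMod 2, μA {ω | NvA ω = v} = μB {ω | NsB ω = v} := by
    intro v
    rcases hz2 v with rfl | rfl
    · rw [auxCE_compl μA hNvA, auxCE_compl μB hNsB, hNvAlaw, hNsB1]
    · rw [hNvAlaw, hNsB1]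
  have hm2 : ∀ v : ZMod 2, μA {ω | NsA ω = v} = μB {ω | NvB ω = v} := by
    intro v
    rcases hz2 v with rfl | rfl
    · rw [auxCE_compl μA hNsA, auxCE_compl μB hNvB, hNsA1, hNvBlaw]
    · rw [hNsA1, hNvBlaw]
  have hXA : ∀ a : ZMod 2, μA {ω | X₁A ω = a} = 1/2 := by
    intro a
    rcases hz2 a with rfl | rfl
    · rw [auxCE_compl μA hX₁A, hX₁Alaw]; norm_num
    · exact hX₁Alaw
  have hXB : ∀ a : ZMod 2, μB {ω | X₂B ω = a} = 1/2 := by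
    intro a
    rcases hz2 a with rfl | rfl
    · rw [auxCE_compl μB hX₂B, hX₂Blaw]; norm_num
    · exact hX₂Blaw
  -- measurability of the maps
  have hadd : Measurable fun p : ZMod 2 × ZMod 2 => p.1 + p.2 := measurable_of_countable _
  have hYAm : Measurable YA := by
    have h : YA = fun ω => X₁A ω + NvA ω := funext hYAdef
    rw [h]; exact hadd.comp (hX₁A.prodMk hNvA)
  have hX₂Am : Measurable X₂A := by
    have h : X₂A = fun ω => YA ω + NsA ω := funext hX₂Adef
    rw [h]; exact hadd.comp (hYAm.prodMk hNsA)
  have hmapA : Measurable fun ω => (X₁A ω, X₂A ω, YA ω) :=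
    hX₁A.prodMk (hX₂Am.prodMk hYAm)
  have hYBm : Measurable YB := by
    have h : YB = fun ω => X₂B ω + NvB ω := funext hYBdef
    rw [h]; exact hadd.comp (hX₂B.prodMk hNvB)
  have hX₁Bm : Measurable X₁B := by
    have h : X₁B = fun ω => YB ω + NsB ω := funext hX₁Bdef
    rw [h]; exact hadd.comp (hYBm.prodMk hNsB)
  have hmapB : Measurable fun ω => (X₁B ω, X₂B ω, YB ω) :=
    hX₁Bm.prodMk (hX₂B.prodMk hYBm)
  refine Measure.ext_of_singleton fun p => ?_
  obtain ⟨a, b, c⟩ := p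
  rw [Measure.map_apply hmapA (measurableSet_singleton _),
    Measure.map_apply hmapB (measurableSet_singleton _)]
  have hsetA : (fun ω => (X₁A ω, X₂A ω, YA ω)) ⁻¹' {(a, b, c)} =
      {ω | X₁A ω = a} ∩ {ω | NvA ω = a + c} ∩ {ω | NsA ω = b + c} := by
    ext ω
    simp only [Set.mem_preimage, Set.mem_singleton_iff, Set.mem_inter_iff, Set.mem_setOf_eq,
      hX₂Adef, hYAdef, Prod.mk.injEq]
    exact auxCE_zmodA _ _ _ _ _ _
  have hsetB : (fun ω => (X₁B ω, X₂B ω, YB ω)) ⁻¹' {(a, b, c)} =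
      {ω | X₂B ω = b} ∩ {ω | NvB ω = b + c} ∩ {ω | NsB ω = a + c} := by
    ext ω
    simp only [Set.mem_preimage, Set.mem_singleton_iff, Set.mem_inter_iff, Set.mem_setOf_eq,
      hX₁Bdef, hYBdef, Prod.mk.injEq]
    exact auxCE_zmodB _ _ _ _ _ _
  rw [hsetA, hsetB,
    auxCE_indep μA X₁A NvA NsA EA hX₁A hNvA hNsA hEA hindepA a (a + c) (b + c),
    auxCE_indep μB X₂B NvB NsB EB hX₂B hNvB hNsB hEB hindepB b (b + c) (a + c),
    hXA a, hXB b, hm1 (a + c), hm2 (b + c)]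
  ring
end

section
/- Suppose Assumptions 1–3 hold with constants ε ≥ 0, δ ∈ (0,1], γ > 0, Condition 1 holds, and Condition 2 holds with constant C > 0. If ε < δC/4, λ > (H[Y] + 2ε)/(δC − 4ε), and ε < γ/(2(1 + 2λ)), then L̂(V) < L̂(Φ) for every feature mask Φ ⊆ {1,…,d} with Φ ≠ V; that is, the solution of the ZIN objective identifies exactly the invariant features. -/
open MeasureTheory ProbabilityTheory
open scoped ENNReal

/-- `- log p` for `p ∈ [0, ∞]`, valued in `[0, ∞]`, with `- log 0 = ∞`. -/
noncomputable def negLog (p : ℝ≥0∞) : ℝ≥0∞ :=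
  if p = 0 then ⊤ else ENNReal.ofReal (-Real.log p.toReal)

/-- Conditional Shannon entropy `H[Y | W]` (natural logarithm) of a finite-valued random
variable `Y` given a finite-valued random variable `W`, under the measure `μ`. -/
noncomputable def condEnt {Ω 𝒴 𝒲 : Type*} [MeasurableSpace Ω] (μ : Measure Ω)
    [Fintype 𝒴] [Fintype 𝒲] (Y : Ω → 𝒴) (W : Ω → 𝒲) : ℝ :=
  ∑ w : 𝒲, ∑ y : 𝒴,
    -((μ {ω | Y ω = y ∧ W ω = w}).toReal *
      Real.log ((μ {ω | Y ω = y ∧ W ω = w}).toReal / (μ {ω | W ω = w}).toReal))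

/-- Shannon entropy `H[Y]` (natural logarithm) of a finite-valued random variable `Y`. -/
noncomputable def shEnt {Ω 𝒴 : Type*} [MeasurableSpace Ω] (μ : Measure Ω)
    [Fintype 𝒴] (Y : Ω → 𝒴) : ℝ :=
  ∑ y : 𝒴, -((μ {ω | Y ω = y}).toReal * Real.log (μ {ω | Y ω = y}).toReal)

/-- Expected cross-entropy risk `E[- log f(X)(Y)]` of a probabilistic classifier `f`,
valued in `[0, ∞]`. -/
noncomputable def ceRisk {Ω α 𝒴 : Type*} [MeasurableSpace Ω] (μ : Measure Ω)
    [Fintype α] [Fintype 𝒴] (X : Ω → α) (Y : Ω → 𝒴) (f : α → PMF 𝒴) : ℝ≥0∞ :=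
  ∑ x : α, ∑ y : 𝒴, μ {ω | X ω = x ∧ Y ω = y} * negLog (f x y)

/-- Environment-wise weighted cross-entropy risk `E[1{ρ(Z) = k} · (- log f(X)(Y))]`. -/
noncomputable def ceRiskW {Ω α 𝒴 𝒵 : Type*} [MeasurableSpace Ω] (μ : Measure Ω)
    [Fintype α] [Fintype 𝒴] {K : ℕ}
    (X : Ω → α) (Y : Ω → 𝒴) (Z : Ω → 𝒵) (ρ : 𝒵 → Fin K) (k : Fin K)
    (f : α → PMF 𝒴) : ℝ≥0∞ :=
  ∑ x : α, ∑ y : 𝒴, μ {ω | ρ (Z ω) = k ∧ X ω = x ∧ Y ω = y} * negLog (f x y)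

/-- The masked feature tuple `X_Φ = (X^j)_{j ∈ Φ}` of a feature vector `X`. -/
def maskFun {Ω 𝒳 : Type*} {d : ℕ} (X : Ω → Fin d → 𝒳) (Φ : Finset (Fin d)) :
    Ω → ({ j : Fin d // j ∈ Φ } → 𝒳) :=
  fun ω j => X ω j.1

/-- The ZIN objective `L̂(Φ)`: infimum over classifiers `f ∈ 𝓕 Φ` of the supremum over
environment-partition functions `ρ : 𝒵 → Fin K` of the cross-entropy risk plus `λ` times the
invariance penalty. -/
noncomputable def Lhat {Ω 𝒳 𝒴 𝒵 : Type*} [MeasurableSpace Ω] (μ : Measure Ω)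
    [Fintype 𝒳] [Fintype 𝒴] (K : ℕ) {d : ℕ}
    (X : Ω → Fin d → 𝒳) (Y : Ω → 𝒴) (Z : Ω → 𝒵)
    (𝓕 : Finset (Fin d) → Set ((Fin d → 𝒳) → PMF 𝒴)) (lam : ℝ)
    (Φ : Finset (Fin d)) : ℝ≥0∞ :=
  ⨅ f ∈ 𝓕 Φ, ⨆ ρ : 𝒵 → Fin K,
    ceRisk μ X Y f + ENNReal.ofReal lam *
      ∑ k : Fin K, (ceRiskW μ X Y Z ρ k f - ⨅ g ∈ 𝓕 Φ, ceRiskW μ X Y Z ρ k g)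

/-! Cross-entropy dominates conditional entropy (Gibbs' inequality), and it does so environment by
environment, so the penalty of a classifier is bounded below by the entropy gain
`H[Y | X_Φ] - H[Y | ρ(Z), X_Φ]` up to the slack `ε` of Assumption 1. For the invariant mask `V`,
Condition 1 makes this gain vanish for every partition, hence `L̂(V) ≤ H[Y | X_V] + (1 + λ) ε`.
A mask `Φ ⊊ V` pays at least `γ` in risk by Assumption 3. A mask containing a spurious feature `j`
pays a penalty of at least `δ C - ε` for the partition that Condition 2 gives for `j`, because
Assumption 2 transfers that partition's gain from `X_j` to `X_Φ`; the bound on `λ` makes this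
exceed `H[Y] ≥ H[Y | X_V]`. -/

theorem Real.neg_mul_log_div_nonneg {a b : ℝ} (ha : 0 ≤ a) (hab : a ≤ b) :
    0 ≤ -(a * Real.log (a / b)) :=
  neg_nonneg.2 <| mul_nonpos_of_nonneg_of_nonpos ha <|
    Real.log_nonpos (div_nonneg ha (ha.trans hab)) (div_le_one_of_le₀ hab (ha.trans hab))

theorem Real.sum_neg_mul_log_div_sum_le {ι : Type*} [Fintype ι] {p q : ι → ℝ}
    (hp : ∀ i, 0 ≤ p i) (hq : ∀ i, 0 ≤ q i) (hq1 : ∑ i, q i ≤ 1)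
    (hpq : ∀ i, 0 < p i → 0 < q i) :
    ∑ i, -(p i * Real.log (p i / ∑ j, p j)) ≤ ∑ i, p i * -Real.log (q i) := by
  set P := ∑ j, p j
  have hP : 0 ≤ P := Finset.sum_nonneg fun i _ => hp i
  -- `log t ≤ t - 1` at `t = P q i / p i`
  have key : ∀ i, -(p i * Real.log (p i / P)) ≤ p i * -Real.log (q i) + (P * q i - p i) := by
    intro i
    rcases (hp i).eq_or_lt with h0 | hpos
    · simpa [← h0] using mul_nonneg hP (hq i)
    have hPpos : 0 < P := hpos.trans_le (Finset.single_le_sum (fun j _ => hp j) (Finset.mem_univ i))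
    have hqi := hpq i hpos
    have hlog : Real.log (P * q i / p i) ≤ P * q i / p i - 1 :=
      Real.log_le_sub_one_of_pos (by positivity)
    rw [Real.log_div (by positivity) hpos.ne', Real.log_mul hPpos.ne' hqi.ne'] at hlog
    have hmul : p i * (P * q i / p i - 1) = P * q i - p i := by field_simp
    rw [Real.log_div hpos.ne' hPpos.ne']
    nlinarith [mul_le_mul_of_nonneg_left hlog hpos.le]
  calc ∑ i, -(p i * Real.log (p i / P))
      ≤ ∑ i, (p i * -Real.log (q i) + (P * q i - p i)) := Finset.sum_le_sum fun i _ => key i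
    _ = ∑ i, p i * -Real.log (q i) + P * (∑ i, q i - 1) := by
      rw [Finset.sum_add_distrib, Finset.sum_sub_distrib, ← Finset.mul_sum]; ring
    _ ≤ ∑ i, p i * -Real.log (q i) :=
      add_le_of_nonpos_right (mul_nonpos_of_nonneg_of_nonpos hP (by linarith))

theorem ofReal_sum_neg_mul_log_le_sum_mul_negLog {ι : Type*} [Fintype ι] (p : ι → ℝ≥0∞)
    (hp : ∀ i, p i ≠ ∞) (q : PMF ι) :
    ENNReal.ofReal (∑ i, -((p i).toReal * Real.log ((p i).toReal / (∑ j, p j).toReal)))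
      ≤ ∑ i, p i * negLog (q i) := by
  by_cases hsupp : ∃ i, p i ≠ 0 ∧ q i = 0
  · obtain ⟨i, hpi, hqi⟩ := hsupp
    calc _ ≤ p i * negLog (q i) := by
          rw [hqi, negLog, if_pos rfl, ENNReal.mul_top hpi]; exact le_top
      _ ≤ ∑ j, p j * negLog (q j) :=
        Finset.single_le_sum (f := fun j => p j * negLog (q j)) (fun _ _ => zero_le)
          (Finset.mem_univ i)
  push Not at hsupp
  have hterm : ∀ i,
      p i * negLog (q i) = ENNReal.ofReal ((p i).toReal * -Real.log (q i).toReal) := by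
    intro i
    by_cases hpi : p i = 0
    · simp [hpi]
    · rw [negLog, if_neg (hsupp i hpi), ENNReal.ofReal_mul ENNReal.toReal_nonneg,
        ENNReal.ofReal_toReal (hp i)]
  have hq1 : ∀ i, (q i).toReal ≤ 1 := fun i => by
    simpa using ENNReal.toReal_mono ENNReal.one_ne_top (q.coe_le_one i)
  rw [Finset.sum_congr rfl fun i _ => hterm i, ← ENNReal.ofReal_sum_of_nonneg fun i _ =>
      mul_nonneg ENNReal.toReal_nonneg
        (neg_nonneg.2 (Real.log_nonpos ENNReal.toReal_nonneg (hq1 i))),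
    ENNReal.toReal_sum fun i _ => hp i]
  refine ENNReal.ofReal_le_ofReal (Real.sum_neg_mul_log_div_sum_le (fun _ => ENNReal.toReal_nonneg)
    (fun _ => ENNReal.toReal_nonneg) ?_ fun i hpi => ?_)
  · have hq := q.tsum_coe
    rw [tsum_fintype] at hq
    rw [← ENNReal.toReal_sum fun i _ => q.apply_ne_top i, hq, ENNReal.toReal_one]
  · exact ENNReal.toReal_pos (hsupp i fun h => by simp [h] at hpi) (q.apply_ne_top i)

theorem measure_eq_sum_preimage_singleton_inter {Ω ι : Type*} [MeasurableSpace Ω] [Fintype ι]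
    [MeasurableSpace ι] [MeasurableSingletonClass ι] (μ : Measure Ω) {E : Ω → ι}
    (hE : Measurable E) (t : Set Ω) : μ t = ∑ i, μ (E ⁻¹' {i} ∩ t) := by
  have := sum_measure_preimage_singleton (μ := μ.restrict t) Finset.univ
    fun i _ => hE (measurableSet_singleton i)
  rw [Finset.coe_univ, Set.preimage_univ, Measure.restrict_apply_univ] at this
  rw [← this]
  exact Finset.sum_congr rfl fun i _ => Measure.restrict_apply (hE (measurableSet_singleton i))

section Entropy

variable {Ω 𝒴 𝒲 : Type*} [MeasurableSpace Ω] (μ : Measure Ω) [Fintype 𝒴] [Fintype 𝒲]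

theorem condEnt_nonneg [IsFiniteMeasure μ] (Y : Ω → 𝒴) (W : Ω → 𝒲) : 0 ≤ condEnt μ Y W :=
  Finset.sum_nonneg fun _ _ => Finset.sum_nonneg fun _ _ =>
    Real.neg_mul_log_div_nonneg ENNReal.toReal_nonneg
      (ENNReal.toReal_mono (measure_ne_top μ _) (measure_mono fun _ h => h.2))

theorem condEnt_of_unique [IsProbabilityMeasure μ] [Unique 𝒲] (Y : Ω → 𝒴) (W : Ω → 𝒲) :
    condEnt μ Y W = shEnt μ Y := by
  have hW : ∀ ω, W ω = default := fun ω => Unique.eq_default (W ω)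
  simp [condEnt, shEnt, hW]

theorem ofReal_condEnt_le_sum_mul_negLog [IsFiniteMeasure μ] [MeasurableSpace 𝒴]
    [MeasurableSingletonClass 𝒴] {Y : Ω → 𝒴} (hY : Measurable Y) (W : Ω → 𝒲)
    (q : 𝒲 → PMF 𝒴) :
    ENNReal.ofReal (condEnt μ Y W)
      ≤ ∑ w, ∑ y, μ {ω | Y ω = y ∧ W ω = w} * negLog (q w y) := by
  rw [condEnt, ENNReal.ofReal_sum_of_nonneg fun _ _ => Finset.sum_nonneg fun _ _ =>
    Real.neg_mul_log_div_nonneg ENNReal.toReal_nonneg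
      (ENNReal.toReal_mono (measure_ne_top μ _) (measure_mono fun _ h => h.2))]
  refine Finset.sum_le_sum fun w _ => ?_
  rw [measure_eq_sum_preimage_singleton_inter μ hY {ω | W ω = w}]
  exact ofReal_sum_neg_mul_log_le_sum_mul_negLog _ (fun y => measure_ne_top μ _) (q w)

theorem ceRisk_eq_sum_of_factorization {α β : Type*} [Fintype α] [Fintype β] [MeasurableSpace α]
    [MeasurableSingletonClass α] {X : Ω → α} (hX : Measurable X) (Y : Ω → 𝒴) {f : α → PMF 𝒴}
    (r : α → β) (q : β → PMF 𝒴) (hf : ∀ x, f x = q (r x)) :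
    ceRisk μ X Y f = ∑ b, ∑ y, μ {ω | Y ω = y ∧ r (X ω) = b} * negLog (q b y) := by
  classical
  have hcell : ∀ b y, μ {ω | Y ω = y ∧ r (X ω) = b}
      = ∑ x, if r x = b then μ {ω | X ω = x ∧ Y ω = y} else 0 := by
    intro b y
    rw [measure_eq_sum_preimage_singleton_inter μ hX]
    refine Finset.sum_congr rfl fun x _ => ?_
    split_ifs with h
    · congr 1; ext ω; simp only [Set.mem_inter_iff, Set.mem_preimage, Set.mem_singleton_iff,
        Set.mem_ofPred_eq]; grind
    · convert measure_empty (μ := μ)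
      ext ω; simp only [Set.mem_inter_iff, Set.mem_preimage, Set.mem_singleton_iff,
        Set.mem_ofPred_eq, Set.mem_empty_iff_false, iff_false]; grind
  simp only [ceRisk, hf, hcell, Finset.sum_mul, ite_mul, zero_mul]
  rw [Finset.sum_comm]
  conv_rhs => rw [Finset.sum_comm]
  refine Finset.sum_congr rfl fun y _ => ?_
  rw [Finset.sum_comm]
  simp

end Entropy

theorem ofReal_condEnt_maskFun_le_ceRisk {Ω 𝒳 𝒴 : Type*} [MeasurableSpace Ω] (μ : Measure Ω)
    [IsFiniteMeasure μ] [Fintype 𝒳] [Nonempty 𝒳] [Fintype 𝒴] [MeasurableSpace 𝒳]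
    [MeasurableSingletonClass 𝒳] [MeasurableSpace 𝒴] [MeasurableSingletonClass 𝒴] {d : ℕ}
    {X : Ω → Fin d → 𝒳} {Y : Ω → 𝒴} (hX : Measurable X) (hY : Measurable Y)
    {Φ : Finset (Fin d)} {f : (Fin d → 𝒳) → PMF 𝒴}
    (hf : DependsOn f (Φ : Set (Fin d))) :
    ENNReal.ofReal (condEnt μ Y (maskFun X Φ)) ≤ ceRisk μ X Y f := by
  classical
  let extend (w : {j // j ∈ Φ} → 𝒳) (j : Fin d) : 𝒳 :=
    if h : j ∈ Φ then w ⟨j, h⟩ else Classical.arbitrary 𝒳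
  rw [ceRisk_eq_sum_of_factorization μ hX Y (fun x (j : {j // j ∈ Φ}) => x j)
    (fun w => f (extend w)) fun x => hf fun j hj => by simp [extend, Finset.mem_coe.mp hj]]
  exact ofReal_condEnt_le_sum_mul_negLog μ hY (maskFun X Φ) _

theorem condEnt_maskFun_empty {Ω 𝒳 𝒴 : Type*} [MeasurableSpace Ω] (μ : Measure Ω)
    [IsProbabilityMeasure μ] [Fintype 𝒳] [Fintype 𝒴] {d : ℕ} (X : Ω → Fin d → 𝒳) (Y : Ω → 𝒴) :
    condEnt μ Y (maskFun X ∅) = shEnt μ Y :=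
  condEnt_of_unique μ Y _

section Environments

variable {Ω α 𝒴 : Type*} [MeasurableSpace Ω] (μ : Measure Ω) [Fintype α] [Fintype 𝒴]

theorem condEnt_prod_eq_sum_restrict {ι 𝒲 : Type*} [Fintype ι] [MeasurableSpace ι]
    [MeasurableSingletonClass ι] [Fintype 𝒲] {E : Ω → ι} (hE : Measurable E) (Y : Ω → 𝒴)
    (W : Ω → 𝒲) :
    condEnt μ Y (fun ω => (E ω, W ω)) = ∑ i, condEnt (μ.restrict {ω | E ω = i}) Y W := by
  rw [condEnt, Fintype.sum_prod_type]
  refine Finset.sum_congr rfl fun i _ => Finset.sum_congr rfl fun w _ =>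
    Finset.sum_congr rfl fun y _ => ?_
  have hi : MeasurableSet {ω | E ω = i} := hE (measurableSet_singleton i)
  simp only [Measure.restrict_apply' hi, Prod.mk.injEq]
  have hYEW : {ω | Y ω = y ∧ E ω = i ∧ W ω = w} = {ω | Y ω = y ∧ W ω = w} ∩ {ω | E ω = i} := by
    ext ω; simp only [Set.mem_inter_iff, Set.mem_ofPred_eq]; tauto
  have hEW : {ω | E ω = i ∧ W ω = w} = {ω | W ω = w} ∩ {ω | E ω = i} := by
    ext ω; simp only [Set.mem_inter_iff, Set.mem_ofPred_eq]; tauto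
  rw [hYEW, hEW]

variable {𝒵 : Type*} {K : ℕ} (X : Ω → α) (Y : Ω → 𝒴) {Z : Ω → 𝒵} {ρ : 𝒵 → Fin K}

theorem ceRiskW_eq_ceRisk_restrict {k : Fin K} (hk : MeasurableSet {ω | ρ (Z ω) = k})
    (f : α → PMF 𝒴) : ceRiskW μ X Y Z ρ k f = ceRisk (μ.restrict {ω | ρ (Z ω) = k}) X Y f := by
  simp only [ceRiskW, ceRisk, Measure.restrict_apply' hk]
  congr! 4 with x _ y _
  ext ω; simp [and_comm]

theorem sum_ceRiskW [MeasurableSpace 𝒵] [Countable 𝒵] [MeasurableSingletonClass 𝒵]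
    (hZ : Measurable Z) (ρ : 𝒵 → Fin K) (f : α → PMF 𝒴) :
    ∑ k, ceRiskW μ X Y Z ρ k f = ceRisk μ X Y f := by
  simp only [ceRiskW, ceRisk]
  rw [Finset.sum_comm]
  refine Finset.sum_congr rfl fun x _ => ?_
  rw [Finset.sum_comm]
  refine Finset.sum_congr rfl fun y _ => ?_
  rw [← Finset.sum_mul, measure_eq_sum_preimage_singleton_inter μ
    ((measurable_of_countable ρ).comp hZ) {ω | X ω = x ∧ Y ω = y}]
  rfl

end Environments

section Objective

variable {Ω 𝒳 𝒴 𝒵 : Type*} [MeasurableSpace Ω] (μ : Measure Ω) [IsFiniteMeasure μ]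
  [Fintype 𝒳] [Nonempty 𝒳] [Fintype 𝒴] [Fintype 𝒵] [MeasurableSpace 𝒳]
  [MeasurableSingletonClass 𝒳] [MeasurableSpace 𝒴] [MeasurableSingletonClass 𝒴]
  [MeasurableSpace 𝒵] [MeasurableSingletonClass 𝒵] {d K : ℕ} {X : Ω → Fin d → 𝒳}
  {Y : Ω → 𝒴} {Z : Ω → 𝒵} {𝓕 : Finset (Fin d) → Set ((Fin d → 𝒳) → PMF 𝒴)}
  {Φ : Finset (Fin d)}

theorem ofReal_condEnt_le_sum_iInf_ceRiskW (hX : Measurable X) (hY : Measurable Y)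
    (hZ : Measurable Z) (h𝓕 : ∀ f ∈ 𝓕 Φ, DependsOn f (Φ : Set (Fin d)))
    (ρ : 𝒵 → Fin K) :
    ENNReal.ofReal (condEnt μ Y fun ω => (ρ (Z ω), maskFun X Φ ω))
      ≤ ∑ k, ⨅ g ∈ 𝓕 Φ, ceRiskW μ X Y Z ρ k g := by
  have hρZ : Measurable fun ω => ρ (Z ω) := (measurable_of_countable ρ).comp hZ
  rw [condEnt_prod_eq_sum_restrict μ hρZ,
    ENNReal.ofReal_sum_of_nonneg fun k _ => condEnt_nonneg _ Y _]
  refine Finset.sum_le_sum fun k _ => le_iInf₂ fun g hg => ?_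
  rw [ceRiskW_eq_ceRisk_restrict μ X Y (hρZ (measurableSet_singleton k))]
  exact ofReal_condEnt_maskFun_le_ceRisk _ hX hY (h𝓕 g hg)

theorem Lhat_le_of_invariant (hX : Measurable X) (hY : Measurable Y) (hZ : Measurable Z)
    (h𝓕 : ∀ f ∈ 𝓕 Φ, DependsOn f (Φ : Set (Fin d)))
    (hinv : ∀ ρ : 𝒵 → Fin K,
      condEnt μ Y (fun ω => (ρ (Z ω), maskFun X Φ ω)) = condEnt μ Y (maskFun X Φ))
    {lam ε : ℝ} (hlam : 0 ≤ lam) (hε : 0 ≤ ε) {f : (Fin d → 𝒳) → PMF 𝒴} (hf : f ∈ 𝓕 Φ)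
    (hfR : ceRisk μ X Y f ≤ ENNReal.ofReal (condEnt μ Y (maskFun X Φ) + ε)) :
    Lhat μ K X Y Z 𝓕 lam Φ ≤ ENNReal.ofReal (condEnt μ Y (maskFun X Φ) + ε + lam * ε) := by
  set H := condEnt μ Y (maskFun X Φ)
  have hpen : ∀ ρ : 𝒵 → Fin K,
      ∑ k, (ceRiskW μ X Y Z ρ k f - ⨅ g ∈ 𝓕 Φ, ceRiskW μ X Y Z ρ k g) ≤ ENNReal.ofReal ε := by
    intro ρ
    have hle : ∀ k, ⨅ g ∈ 𝓕 Φ, ceRiskW μ X Y Z ρ k g ≤ ceRiskW μ X Y Z ρ k f :=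
      fun k => iInf₂_le f hf
    have hinf : ∑ k, ⨅ g ∈ 𝓕 Φ, ceRiskW μ X Y Z ρ k g ≤ ceRisk μ X Y f := by
      rw [← sum_ceRiskW μ X Y hZ ρ f]
      exact Finset.sum_le_sum fun k _ => hle k
    calc ∑ k, (ceRiskW μ X Y Z ρ k f - ⨅ g ∈ 𝓕 Φ, ceRiskW μ X Y Z ρ k g)
        ≤ ceRisk μ X Y f - ∑ k, ⨅ g ∈ 𝓕 Φ, ceRiskW μ X Y Z ρ k g := by
          refine ENNReal.le_sub_of_add_le_right
            (ne_top_of_le_ne_top ENNReal.ofReal_ne_top (hinf.trans hfR)) ?_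
          rw [← Finset.sum_add_distrib, ← sum_ceRiskW μ X Y hZ ρ f]
          exact Finset.sum_le_sum fun k _ => (tsub_add_cancel_of_le (hle k)).le
      _ ≤ ceRisk μ X Y f - ENNReal.ofReal H :=
          tsub_le_tsub_left (hinv ρ ▸ ofReal_condEnt_le_sum_iInf_ceRiskW μ hX hY hZ h𝓕 ρ) _
      _ ≤ ENNReal.ofReal (H + ε) - ENNReal.ofReal H := tsub_le_tsub_right hfR _
      _ = ENNReal.ofReal ε := by
          rw [← ENNReal.ofReal_sub _ (condEnt_nonneg μ Y _), add_sub_cancel_left]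
  refine (iInf₂_le f hf).trans (iSup_le fun ρ => ?_)
  calc ceRisk μ X Y f + ENNReal.ofReal lam *
        ∑ k, (ceRiskW μ X Y Z ρ k f - ⨅ g ∈ 𝓕 Φ, ceRiskW μ X Y Z ρ k g)
      ≤ ENNReal.ofReal (H + ε) + ENNReal.ofReal lam * ENNReal.ofReal ε := by
        gcongr; exact hpen ρ
    _ = ENNReal.ofReal (H + ε + lam * ε) := by
        rw [← ENNReal.ofReal_mul hlam, ← ENNReal.ofReal_add
          (add_nonneg (condEnt_nonneg μ Y _) hε) (mul_nonneg hlam hε)]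

theorem le_Lhat (hX : Measurable X) (hY : Measurable Y) (hZ : Measurable Z)
    (h𝓕 : ∀ f ∈ 𝓕 Φ, DependsOn f (Φ : Set (Fin d)))
    (lam : ℝ) (ρ : 𝒵 → Fin K) :
    ENNReal.ofReal (condEnt μ Y (maskFun X Φ)) + ENNReal.ofReal lam *
      (ENNReal.ofReal (condEnt μ Y (maskFun X Φ)) - ∑ k, ⨅ g ∈ 𝓕 Φ, ceRiskW μ X Y Z ρ k g)
      ≤ Lhat μ K X Y Z 𝓕 lam Φ := by
  refine le_iInf₂ fun f hf => le_iSup_of_le ρ ?_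
  have hRf := ofReal_condEnt_maskFun_le_ceRisk μ hX hY (h𝓕 f hf)
  gcongr
  calc ENNReal.ofReal (condEnt μ Y (maskFun X Φ)) - ∑ k, ⨅ g ∈ 𝓕 Φ, ceRiskW μ X Y Z ρ k g
      ≤ ∑ k, ceRiskW μ X Y Z ρ k f - ∑ k, ⨅ g ∈ 𝓕 Φ, ceRiskW μ X Y Z ρ k g := by
        rw [sum_ceRiskW μ X Y hZ ρ]
        exact tsub_le_tsub_right hRf _
    _ ≤ ∑ k, (ceRiskW μ X Y Z ρ k f - ⨅ g ∈ 𝓕 Φ, ceRiskW μ X Y Z ρ k g) := by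
        rw [tsub_le_iff_right, ← Finset.sum_add_distrib]
        exact Finset.sum_le_sum fun k _ => le_tsub_add

theorem le_Lhat_of_sum_ceRiskW_le (hX : Measurable X) (hY : Measurable Y) (hZ : Measurable Z)
    (h𝓕 : ∀ f ∈ 𝓕 Φ, DependsOn f (Φ : Set (Fin d)))
    {lam : ℝ} (hlam : 0 ≤ lam) (ρ : 𝒵 → Fin K) {g : Fin K → (Fin d → 𝒳) → PMF 𝒴}
    (hg : ∀ k, g k ∈ 𝓕 Φ) {b : ℝ} (hb : 0 ≤ b)
    (hgR : ∑ k, ceRiskW μ X Y Z ρ k (g k) ≤ ENNReal.ofReal b) :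
    ENNReal.ofReal (condEnt μ Y (maskFun X Φ) + lam * (condEnt μ Y (maskFun X Φ) - b))
      ≤ Lhat μ K X Y Z 𝓕 lam Φ := by
  refine le_trans ?_ (le_Lhat μ hX hY hZ h𝓕 lam ρ)
  refine ENNReal.ofReal_add_le.trans ?_
  rw [ENNReal.ofReal_mul hlam, ENNReal.ofReal_sub _ hb]
  gcongr
  exact (Finset.sum_le_sum fun k _ => iInf₂_le (g k) (hg k)).trans hgR

end Objective

theorem zin_identifiability_general
    {Ω 𝒳 𝒴 𝒵 : Type*} [MeasurableSpace Ω] (μ : Measure Ω) [IsProbabilityMeasure μ]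
    [Fintype 𝒳] [Nonempty 𝒳] [Fintype 𝒴] [Fintype 𝒵]
    [MeasurableSpace 𝒳] [MeasurableSingletonClass 𝒳]
    [MeasurableSpace 𝒴] [MeasurableSingletonClass 𝒴]
    [MeasurableSpace 𝒵] [MeasurableSingletonClass 𝒵]
    {d : ℕ} (X : Ω → Fin d → 𝒳) (Y : Ω → 𝒴) (Z : Ω → 𝒵)
    (hX : Measurable X) (hY : Measurable Y) (hZ : Measurable Z)
    -- the invariant features `V` and the number of inferred environments `K`
    (V : Finset (Fin d)) {K : ℕ} (hK : 1 ≤ K)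
    -- the classifier classes `𝓕 Φ`: nonempty sets of classifiers depending only on `X_Φ`
    (𝓕 : Finset (Fin d) → Set ((Fin d → 𝒳) → PMF 𝒴))
    (h𝓕dep : ∀ Φ, ∀ f ∈ 𝓕 Φ, ∀ x x' : Fin d → 𝒳, (∀ j ∈ Φ, x j = x' j) → f x = f x')
    -- constants
    (lam ε δ γ C : ℝ)
    (hlam0 : 0 ≤ lam) (hε0 : 0 ≤ ε) (hδ0 : 0 < δ) (hγ0 : 0 < γ)
    -- Assumption 1: the function classes are rich enough
    (A1 : ∀ (Φ : Finset (Fin d)) (ρ : 𝒵 → Fin K),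
      (∃ f ∈ 𝓕 Φ, ceRisk μ X Y f ≤ ENNReal.ofReal (condEnt μ Y (maskFun X Φ) + ε)) ∧
      (∃ g : Fin K → ((Fin d → 𝒳) → PMF 𝒴), (∀ k, g k ∈ 𝓕 Φ) ∧
        ∑ k : Fin K, ceRiskW μ X Y Z ρ k (g k) ≤
          ENNReal.ofReal (condEnt μ Y (fun ω => (ρ (Z ω), maskFun X Φ ω)) + ε)))
    -- Assumption 2: adding features does not make the penalty of a spurious feature vanish
    (A2 : ∀ A B : Finset (Fin d), A.Nonempty → A ⊆ Finset.univ \ V → ∀ ρ : 𝒵 → Fin K,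
      condEnt μ Y (maskFun X (A ∪ B)) -
          condEnt μ Y (fun ω => (ρ (Z ω), maskFun X (A ∪ B) ω)) ≥
        δ * (condEnt μ Y (maskFun X A) -
          condEnt μ Y (fun ω => (ρ (Z ω), maskFun X A ω))))
    -- Assumption 3: every feature carries γ of extra information about Y
    (A3 : ∀ A B : Finset (Fin d), B.Nonempty → Disjoint A B →
      condEnt μ Y (maskFun X (A ∪ B)) ≤ condEnt μ Y (maskFun X A) - γ)
    -- Condition 1: invariance preserving
    (C1 : ∀ ρ : 𝒵 → Fin K,
      condEnt μ Y (fun ω => (ρ (Z ω), maskFun X V ω)) = condEnt μ Y (maskFun X V))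
    -- Condition 2: non-invariance distinguishing
    (C2 : ∀ j : Fin d, j ∉ V → ∃ ρ : 𝒵 → Fin K,
      condEnt μ Y (maskFun X {j}) -
        condEnt μ Y (fun ω => (ρ (Z ω), maskFun X {j} ω)) ≥ C)
    -- constraints on the constants
    (h1 : ε < δ * C / 4)
    (h2 : lam > (shEnt μ Y + 2 * ε) / (δ * C - 4 * ε))
    (h3 : ε < γ / (2 * (1 + 2 * lam))) :
    ∀ Φ : Finset (Fin d), Φ ≠ V →
      Lhat μ K X Y Z 𝓕 lam V < Lhat μ K X Y Z 𝓕 lam Φ := by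
  intro Φ hΦV
  have h𝓕 : ∀ Φ, ∀ f ∈ 𝓕 Φ, DependsOn f (Φ : Set (Fin d)) := fun Φ f hf _ _ => h𝓕dep Φ f hf _ _
  have hHV : condEnt μ Y (maskFun X V) ≤ shEnt μ Y := by
    rcases V.eq_empty_or_nonempty with rfl | hV
    · exact (condEnt_maskFun_empty μ X Y).le
    · have := A3 ∅ V hV (Finset.disjoint_empty_left V)
      rw [Finset.empty_union, condEnt_maskFun_empty] at this
      linarith
  have hε : ε * (2 * (1 + 2 * lam)) < γ := (lt_div_iff₀ (by positivity)).mp h3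
  have hHV0 := condEnt_nonneg μ Y (maskFun X V)
  have hHΦ0 := condEnt_nonneg μ Y (maskFun X Φ)
  obtain ⟨f, hf, hfR⟩ := (A1 V fun _ => ⟨0, hK⟩).1
  refine (Lhat_le_of_invariant μ hX hY hZ (h𝓕 V) C1 hlam0 hε0 hf hfR).trans_lt ?_
  by_cases hΦ : Φ ⊆ V
  · have hγ := A3 Φ (V \ Φ) (Finset.sdiff_nonempty.mpr fun h => hΦV (hΦ.antisymm h))
      Finset.disjoint_sdiff
    rw [Finset.union_sdiff_of_subset hΦ] at hγ
    refine lt_of_lt_of_le ?_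
      (le_self_add.trans (le_Lhat μ hX hY hZ (h𝓕 Φ) lam fun _ => ⟨0, hK⟩))
    rw [ENNReal.ofReal_lt_ofReal_iff']
    constructor <;> nlinarith [mul_nonneg hlam0 hε0]
  · obtain ⟨j, hjΦ, hjV⟩ := Finset.not_subset.mp hΦ
    obtain ⟨ρ, hρ⟩ := C2 j hjV
    obtain ⟨g, hg, hgR⟩ := (A1 Φ ρ).2
    have hgap := A2 {j} Φ (Finset.singleton_nonempty j) (by simp [hjV]) ρ
    rw [Finset.union_eq_right.mpr (Finset.singleton_subset_iff.mpr hjΦ)] at hgap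
    refine lt_of_lt_of_le ?_ (le_Lhat_of_sum_ceRiskW_le μ hX hY hZ (h𝓕 Φ) hlam0 ρ hg
      (add_nonneg (condEnt_nonneg μ Y _) hε0) hgR)
    have hδC : δ * C ≤ condEnt μ Y (maskFun X Φ) -
        condEnt μ Y (fun ω => (ρ (Z ω), maskFun X Φ ω)) :=
      (mul_le_mul_of_nonneg_left hρ hδ0.le).trans hgap
    have hlam := (div_lt_iff₀ (by linarith : 0 < δ * C - 4 * ε)).mp h2
    rw [ENNReal.ofReal_lt_ofReal_iff']
    constructor <;> nlinarith [mul_le_mul_of_nonneg_left hδC hlam0, mul_nonneg hlam0 hε0]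

/-- **Theorem 2 (identifiability of invariant features).** Under Assumptions 1–3 and
Conditions 1–2, if `ε < δC/4`, `λ > (H[Y] + 2ε)/(δC - 4ε)` and `ε < γ/(2(1 + 2λ))`, then
`L̂(V) < L̂(Φ)` for every feature mask `Φ ≠ V`: the solution of the ZIN objective identifies
exactly the invariant features `V`. -/
theorem zin_identifiability
    {Ω 𝒳 𝒴 𝒵 : Type*} [MeasurableSpace Ω] (μ : Measure Ω) [IsProbabilityMeasure μ]
    [Fintype 𝒳] [Nonempty 𝒳] [Fintype 𝒴] [Nonempty 𝒴] [Fintype 𝒵] [Nonempty 𝒵]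
    [MeasurableSpace 𝒳] [MeasurableSingletonClass 𝒳]
    [MeasurableSpace 𝒴] [MeasurableSingletonClass 𝒴]
    [MeasurableSpace 𝒵] [MeasurableSingletonClass 𝒵]
    {d : ℕ} (X : Ω → Fin d → 𝒳) (Y : Ω → 𝒴) (Z : Ω → 𝒵)
    (hX : Measurable X) (hY : Measurable Y) (hZ : Measurable Z)
    -- the invariant features `V` and the number of inferred environments `K`
    (V : Finset (Fin d)) {K : ℕ} (hK : 1 ≤ K)
    -- the classifier classes `𝓕 Φ`: nonempty sets of classifiers depending only on `X_Φ`
    (𝓕 : Finset (Fin d) → Set ((Fin d → 𝒳) → PMF 𝒴))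
    (h𝓕ne : ∀ Φ, (𝓕 Φ).Nonempty)
    (h𝓕dep : ∀ Φ, ∀ f ∈ 𝓕 Φ, ∀ x x' : Fin d → 𝒳, (∀ j ∈ Φ, x j = x' j) → f x = f x')
    -- constants
    (lam ε δ γ C : ℝ)
    (hlam0 : 0 ≤ lam) (hε0 : 0 ≤ ε) (hδ0 : 0 < δ) (hδ1 : δ ≤ 1) (hγ0 : 0 < γ) (hC0 : 0 < C)
    -- Assumption 1: the function classes are rich enough
    (A1 : ∀ (Φ : Finset (Fin d)) (ρ : 𝒵 → Fin K),
      (∃ f ∈ 𝓕 Φ, ceRisk μ X Y f ≤ ENNReal.ofReal (condEnt μ Y (maskFun X Φ) + ε)) ∧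
      (∃ g : Fin K → ((Fin d → 𝒳) → PMF 𝒴), (∀ k, g k ∈ 𝓕 Φ) ∧
        ∑ k : Fin K, ceRiskW μ X Y Z ρ k (g k) ≤
          ENNReal.ofReal (condEnt μ Y (fun ω => (ρ (Z ω), maskFun X Φ ω)) + ε)))
    -- Assumption 2: adding features does not make the penalty of a spurious feature vanish
    (A2 : ∀ A B : Finset (Fin d), A.Nonempty → A ⊆ Finset.univ \ V → ∀ ρ : 𝒵 → Fin K,
      condEnt μ Y (maskFun X (A ∪ B)) -
          condEnt μ Y (fun ω => (ρ (Z ω), maskFun X (A ∪ B) ω)) ≥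
        δ * (condEnt μ Y (maskFun X A) -
          condEnt μ Y (fun ω => (ρ (Z ω), maskFun X A ω))))
    -- Assumption 3: every feature carries γ of extra information about Y
    (A3 : ∀ A B : Finset (Fin d), B.Nonempty → Disjoint A B →
      condEnt μ Y (maskFun X (A ∪ B)) ≤ condEnt μ Y (maskFun X A) - γ)
    -- Condition 1: invariance preserving
    (C1 : ∀ ρ : 𝒵 → Fin K,
      condEnt μ Y (fun ω => (ρ (Z ω), maskFun X V ω)) = condEnt μ Y (maskFun X V))
    -- Condition 2: non-invariance distinguishing
    (C2 : ∀ j : Fin d, j ∉ V → ∃ ρ : 𝒵 → Fin K,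
      condEnt μ Y (maskFun X {j}) -
        condEnt μ Y (fun ω => (ρ (Z ω), maskFun X {j} ω)) ≥ C)
    -- constraints on the constants
    (h1 : ε < δ * C / 4)
    (h2 : lam > (shEnt μ Y + 2 * ε) / (δ * C - 4 * ε))
    (h3 : ε < γ / (2 * (1 + 2 * lam))) :
    ∀ Φ : Finset (Fin d), Φ ≠ V →
      Lhat μ K X Y Z 𝓕 lam V < Lhat μ K X Y Z 𝓕 lam Φ :=
  zin_identifiability_general μ X Y Z hX hY hZ V hK 𝓕 h𝓕dep lam ε δ γ C hlam0 hε0 hδ0 hγ0 A1 A2 A3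
    C1 C2 h1 h2 h3
end

section
/- Let Y, X, Z be random variables on a common probability space taking values in nonempty finite types 𝒴, 𝒳, 𝒵, and let X_v be a random variable (for instance a sub-tuple of X) valued in a finite type. Suppose there exist a finite type 𝒲, a function ρ : 𝒵 → 𝒲, and an injective function h : 𝒳 × 𝒴 → 𝒲 such that ρ(Z) = h(X, Y) almost surely. Then H[Y | (X_v, ρ(Z))] = 0. Consequently, if H[Y | X_v] ≥ γ for some constant γ > 0, then H[Y | X_v] − H[Y | (X_v, ρ(Z))] ≥ γ > 0, so the invariance preserving condition H[Y | (X_v, ρ(Z))] = H[Y | X_v] (Condition 1) is violated. -/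
open MeasureTheory ProbabilityTheory
open scoped ENNReal

/- Each summand vanishes: for `y = f w` the events `{Y = y, W = w}` and `{W = w}` agree a.e.,
so the logarithm is `log (t / t) = 0` (also when `t = 0`); for `y ≠ f w` the event is null. -/
theorem condEnt_eq_zero_of_ae_eq_comp {Ω 𝒴 𝒲 : Type*} [MeasurableSpace Ω] (μ : Measure Ω)
    [Fintype 𝒴] [Fintype 𝒲] (Y : Ω → 𝒴) (W : Ω → 𝒲) (f : 𝒲 → 𝒴)
    (hf : ∀ᵐ ω ∂μ, Y ω = f (W ω)) : condEnt μ Y W = 0 := by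
  refine Finset.sum_eq_zero fun w _ => Finset.sum_eq_zero fun y _ => ?_
  by_cases hy : y = f w
  · have hevent : μ {ω | Y ω = y ∧ W ω = w} = μ {ω | W ω = w} := by
      refine measure_congr (Filter.eventuallyEq_set.mpr ?_)
      filter_upwards [hf] with ω hω
      simp only [and_iff_right_iff_imp]
      rintro rfl
      rw [hω, hy]
    simp [hevent]
  · have hnull : μ {ω | Y ω = y ∧ W ω = w} = 0 := by
      refine measure_eq_zero_iff_ae_notMem.mpr ?_
      filter_upwards [hf] with ω hω
      rintro ⟨rfl, rfl⟩
      exact hy hω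
    simp [hnull]

theorem partition_injective_of_input_label_violates_condition1_general
    {Ω 𝒴 𝒳 𝒳v 𝒵 : Type*} [MeasurableSpace Ω] (μ : Measure Ω)
    [Fintype 𝒴] [Nonempty 𝒴] [Nonempty 𝒳] [Fintype 𝒳v]
    (Y : Ω → 𝒴) (X : Ω → 𝒳) (Xv : Ω → 𝒳v) (Z : Ω → 𝒵)
    {𝒲 : Type*} [Fintype 𝒲] (ρ : 𝒵 → 𝒲) (h : 𝒳 × 𝒴 → 𝒲)
    (hinj : Function.Injective h)
    (hae : ∀ᵐ ω ∂μ, ρ (Z ω) = h (X ω, Y ω)) :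
    condEnt μ Y (fun ω => (Xv ω, ρ (Z ω))) = 0 ∧
    ∀ γ : ℝ, 0 < γ → γ ≤ condEnt μ Y Xv →
      γ ≤ condEnt μ Y Xv - condEnt μ Y (fun ω => (Xv ω, ρ (Z ω))) := by
  have hzero : condEnt μ Y (fun ω => (Xv ω, ρ (Z ω))) = 0 := by
    refine condEnt_eq_zero_of_ae_eq_comp μ Y _ (fun p => (Function.invFun h p.2).2) ?_
    filter_upwards [hae] with ω hω
    rw [hω, Function.leftInverse_invFun hinj]
  exact ⟨hzero, fun γ _ hγ => by rwa [hzero, sub_zero]⟩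

/-- **Corollary 1 (b): an environment partition that is an injective function of the pair
`(X, Y)` violates Condition 1.** If `ρ(Z) = h(X, Y)` a.s. for an injective `h`, then
`H[Y | (X_v, ρ(Z))] = 0`; hence if `H[Y | X_v] ≥ γ > 0` then
`H[Y | X_v] - H[Y | (X_v, ρ(Z))] ≥ γ > 0`, violating the invariance preserving condition. -/
theorem partition_injective_of_input_label_violates_condition1
    {Ω 𝒴 𝒳 𝒳v 𝒵 : Type*} [MeasurableSpace Ω] (μ : Measure Ω) [IsProbabilityMeasure μ]
    [Fintype 𝒴] [Nonempty 𝒴] [Fintype 𝒳] [Nonempty 𝒳] [Fintype 𝒳v] [Nonempty 𝒳v]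
    [Fintype 𝒵] [Nonempty 𝒵]
    [MeasurableSpace 𝒴] [MeasurableSingletonClass 𝒴]
    [MeasurableSpace 𝒳] [MeasurableSingletonClass 𝒳]
    [MeasurableSpace 𝒳v] [MeasurableSingletonClass 𝒳v]
    [MeasurableSpace 𝒵] [MeasurableSingletonClass 𝒵]
    (Y : Ω → 𝒴) (X : Ω → 𝒳) (Xv : Ω → 𝒳v) (Z : Ω → 𝒵)
    (hY : Measurable Y) (hX : Measurable X) (hXv : Measurable Xv) (hZ : Measurable Z)
    {𝒲 : Type*} [Fintype 𝒲] (ρ : 𝒵 → 𝒲) (h : 𝒳 × 𝒴 → 𝒲)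
    (hinj : Function.Injective h)
    (hae : ∀ᵐ ω ∂μ, ρ (Z ω) = h (X ω, Y ω)) :
    condEnt μ Y (fun ω => (Xv ω, ρ (Z ω))) = 0 ∧
    ∀ γ : ℝ, 0 < γ → γ ≤ condEnt μ Y Xv →
      γ ≤ condEnt μ Y Xv - condEnt μ Y (fun ω => (Xv ω, ρ (Z ω))) :=
  partition_injective_of_input_label_violates_condition1_general μ Y X Xv Z ρ h hinj hae
end
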